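/- Let R be a closed SMLL net, i.e. an SMLL net in which no occurrence of ⊥ appears in any of its conclusion formulas. If R is in normal form for the reduction relation →, then R contains no cut links (lazy cut elimination suffices to eliminate all cuts from closed nets). -/

import Mathlib

/-! # SMLL: multiplicative linear logic with synchronization

Formalization of the proof-structures, correctness criterion, reduction and
multi-token machine (SIAM) of Dal Lago, Faggian, Hasuo, Yoshimizu,
"The Geometry of Synchronization". -/

/-- SMLL formulas (in negation normal form):
`A ::= 1 | ⊥ | X | X⊥ | A ⊗ A | A ⅋ A`. -/
inductive Formula : Type
  | one : Formula
  | bot : Formula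
  | var : ℕ → Formula
  | covar : ℕ → Formula
  | tens : Formula → Formula → Formula
  | parr : Formula → Formula → Formula
  deriving DecidableEq

namespace Formula

/-- Linear negation. -/
def dual : Formula → Formula
  | one => bot
  | bot => one
  | var n => covar n
  | covar n => var n
  | tens A B => parr A.dual B.dual
  | parr A B => tens A.dual B.dual

/-- Positive formulas: `P ::= 1 | P ⊗ P`. -/
inductive Positive : Formula → Prop
  | one : Positive one
  | tens {A B : Formula} : Positive A → Positive B → Positive (tens A B)

/-- Negative formulas: `N ::= ⊥ | N ⅋ N`. -/
inductive Negative : Formula → Prop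
  | bot : Negative bot
  | parr {A B : Formula} : Negative A → Negative B → Negative (parr A B)

/-- A formula is polarized when it is positive or negative. -/
def Polarized (A : Formula) : Prop := Positive A ∨ Negative A

/-- Whether `⊥` occurs in a formula. -/
def hasBotB : Formula → Bool
  | one => false
  | bot => true
  | var _ => false
  | covar _ => false
  | tens A B => hasBotB A || hasBotB B
  | parr A B => hasBotB A || hasBotB B

/-- Addresses of occurrences inside a formula: `false` = left, `true` = right. -/
abbrev Addr := List Bool

/-- Subformula at a given address (if the address is meaningful). -/
def sub : Formula → Addr → Option Formula
  | A, [] => some A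
  | tens A _, false :: m => sub A m
  | tens _ B, true :: m => sub B m
  | parr A _, false :: m => sub A m
  | parr _ B, true :: m => sub B m
  | _, _ :: _ => none

def IsAtom : Formula → Prop
  | one => True
  | bot => True
  | var _ => True
  | covar _ => True
  | tens _ _ => False
  | parr _ _ => False

/-- `m` is the address of an occurrence of an atom in `A`. -/
def AtomOcc (A : Formula) (m : Addr) : Prop := ∃ a, sub A m = some a ∧ IsAtom a

/-- The atom occurrence at `m` in `A` is positive (it is `1` or `X`). -/
def PosOcc (A : Formula) (m : Addr) : Prop :=
  ∃ a, sub A m = some a ∧ (a = one ∨ ∃ n, a = var n)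

/-- The atom occurrence at `m` in `A` is negative (it is `⊥` or `X⊥`). -/
def NegOcc (A : Formula) (m : Addr) : Prop :=
  ∃ a, sub A m = some a ∧ (a = bot ∨ ∃ n, a = covar n)

theorem NegOcc.atomOcc {A : Formula} {m : Addr} (h : NegOcc A m) : AtomOcc A m := by
  obtain ⟨a, ha, h⟩ := h
  refine ⟨a, ha, ?_⟩
  rcases h with rfl | ⟨n, rfl⟩ <;> trivial

theorem PosOcc.atomOcc {A : Formula} {m : Addr} (h : PosOcc A m) : AtomOcc A m := by
  obtain ⟨a, ha, h⟩ := h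
  refine ⟨a, ha, ?_⟩
  rcases h with rfl | ⟨n, rfl⟩ <;> trivial

end Formula

/-- The sorts of links of an SMLL structure. -/
inductive LinkSort : Type
  | ax | cut | tens | parr | one | bot | sync
  deriving DecidableEq

/-- An SMLL proof-structure (with boxes): a finite directed multigraph whose
edges are typed by formulas and whose nodes are links.  Every edge is the
conclusion of exactly one link (its `src`); it is the premiss of the link
`tgt`, if any (edges with no target are the conclusions of the structure).
`pIdx` indexes an edge among the premisses of its target (for `⊗`/`⅋`-links:
`0` = left, `1` = right; for sync links it pairs premisses with conclusions);
`cIdx` indexes an edge among the conclusions of its source (for sync links,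
the `i`-th conclusion corresponds to the `i`-th premiss).  Each `bot`-link is
the lock of a box; `box n` is the innermost box containing the node `n` and
`boxes n` is the set of all boxes containing `n`. -/
structure Struct : Type 1 where
  Edge : Type
  Node : Type
  edgeFintype : Fintype Edge
  nodeFintype : Fintype Node
  edgeDecEq : DecidableEq Edge
  nodeDecEq : DecidableEq Node
  typ : Edge → Formula
  sort : Node → LinkSort
  src : Edge → Node
  tgt : Edge → Option Node
  pIdx : Edge → ℕ
  cIdx : Edge → ℕ
  box : Node → Option Node
  boxes : Node → Finset Node

attribute [instance] Struct.edgeFintype Struct.nodeFintype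
attribute [instance] Struct.edgeDecEq Struct.nodeDecEq

namespace Struct

variable (S : Struct)

/-- The conclusions of a link. -/
def concls (n : S.Node) : Finset S.Edge := Finset.univ.filter fun e => S.src e = n

/-- The premisses of a link. -/
def prems (n : S.Node) : Finset S.Edge := Finset.univ.filter fun e => S.tgt e = some n

/-- The conclusions of the structure. -/
def IsConcl (e : S.Edge) : Prop := S.tgt e = none

/-- Well-formedness of an SMLL structure: the constraints that the sort of a
link induces on the number and the types of its premisses and conclusions,
together with the coherence of the nesting of boxes. -/
def WF : Prop :=
  (∀ n, S.sort n = .ax → S.prems n = ∅ ∧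
    ∃ e f, e ≠ f ∧ S.concls n = {e, f} ∧ S.typ f = (S.typ e).dual) ∧
  (∀ n, S.sort n = .cut → S.concls n = ∅ ∧
    ∃ e f, e ≠ f ∧ S.prems n = {e, f} ∧ S.typ f = (S.typ e).dual) ∧
  (∀ n, S.sort n = .tens → ∃ e f g, e ≠ f ∧ S.prems n = {e, f} ∧
    S.pIdx e = 0 ∧ S.pIdx f = 1 ∧ S.concls n = {g} ∧
    S.typ g = .tens (S.typ e) (S.typ f)) ∧
  (∀ n, S.sort n = .parr → ∃ e f g, e ≠ f ∧ S.prems n = {e, f} ∧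
    S.pIdx e = 0 ∧ S.pIdx f = 1 ∧ S.concls n = {g} ∧
    S.typ g = .parr (S.typ e) (S.typ f)) ∧
  (∀ n, S.sort n = .one → S.prems n = ∅ ∧ ∃ e, S.concls n = {e} ∧ S.typ e = .one) ∧
  (∀ n, S.sort n = .bot → S.prems n = ∅ ∧ ∃ e, S.concls n = {e} ∧ S.typ e = .bot) ∧
  (∀ n, S.sort n = .sync →
    (∀ e ∈ S.prems n, (S.typ e).Polarized) ∧
    (∀ e ∈ S.prems n, ∃! f, f ∈ S.concls n ∧ S.cIdx f = S.pIdx e) ∧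
    (∀ f ∈ S.concls n, ∃! e, e ∈ S.prems n ∧ S.pIdx e = S.cIdx f) ∧
    (∀ e ∈ S.prems n, ∀ f ∈ S.concls n, S.cIdx f = S.pIdx e → S.typ f = S.typ e)) ∧
  (∀ n b, b ∈ S.boxes n → S.sort b = .bot) ∧
  (∀ n, S.box n = none → S.boxes n = ∅) ∧
  (∀ n b, S.box n = some b → b ∉ S.boxes b ∧ S.boxes n = insert b (S.boxes b)) ∧
  (∀ e n, S.tgt e = some n → S.boxes n ⊆ S.boxes (S.src e))

/-- `b` is the representative of the node `m` in the level-`ℓ` graph (the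
graph in which each box strictly below level `ℓ` is collapsed to a single
box-node, identified with its `bot`-link).  For `ℓ = none` this is the
`0`-graph. -/
def RepAt (ℓ : Option S.Node) (m b : S.Node) : Prop :=
  (S.box m = ℓ ∧ b = m) ∨ (b ∈ S.boxes m ∧ S.box b = ℓ)

/-- Edge `e` joins the nodes `u` and `v` (undirectedly) in the level-`ℓ` graph. -/
def ConnectsAt (ℓ : Option S.Node) (e : S.Edge) (u v : S.Node) : Prop :=
  ∃ t, S.tgt e = some t ∧ (S.box t = ℓ ∨ S.box (S.src e) = ℓ) ∧
    ((S.RepAt ℓ (S.src e) u ∧ S.RepAt ℓ t v) ∨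
     (S.RepAt ℓ (S.src e) v ∧ S.RepAt ℓ t u))

/-- The out-edges of a sync link are its positive conclusions and its negative
premisses. -/
def OutEdgeOf (l : S.Node) (e : S.Edge) : Prop :=
  S.sort l = .sync ∧
  ((S.src e = l ∧ (S.typ e).Positive) ∨ (S.tgt e = some l ∧ (S.typ e).Negative))

/-- There is a switching cycle in the level-`ℓ` graph: a cyclic undirected
simple path which uses at most one of the two premisses of each `⅋`-link and
at most one out-edge of each sync link. -/
def SwitchingCycleAt (ℓ : Option S.Node) : Prop :=
  ∃ (k : ℕ) (v : Fin (k + 1) → S.Node) (e : Fin (k + 1) → S.Edge),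
    Function.Injective v ∧ Function.Injective e ∧
    (∀ i, S.ConnectsAt ℓ (e i) (v i) (v (i + 1))) ∧
    (∀ p, S.sort p = .parr → Set.Subsingleton {i | S.tgt (e i) = some p}) ∧
    (∀ l, S.sort l = .sync → Set.Subsingleton {i | S.OutEdgeOf l (e i)})

/-- Correctness criterion: no switching cycle in the `0`-graph, and,
recursively, no switching cycle in the graph of the content of any box. -/
def Correct : Prop := ∀ ℓ : Option S.Node, ¬ S.SwitchingCycleAt ℓ

/-- A net is a well-formed correct structure. -/
def IsNet : Prop := S.WF ∧ S.Correct

/-! ## Sync paths and hereditary conclusions -/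

/-- One step of a sync path: entering a sync link on a premiss and coming out
on the corresponding conclusion. -/
def SyncStepE (e f : S.Edge) : Prop :=
  ∃ l, S.sort l = .sync ∧ S.tgt e = some l ∧ S.src f = l ∧ S.cIdx f = S.pIdx e

/-- `e` is a hereditary conclusion of the link `l`: there is a sync path from
a conclusion of `l` to `e`. -/
def HereditaryConcl (l : S.Node) (e : S.Edge) : Prop :=
  ∃ f, S.src f = l ∧ Relation.ReflTransGen S.SyncStepE f e

/-- The edge emerges from a box: its source is a `bot`-link (the edge is the
lock of a box) or lies inside some box. -/
def FromBox (e : S.Edge) : Prop := S.sort (S.src e) = .bot ∨ S.box (S.src e) ≠ none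

/-- `e` is a hereditary conclusion of a box. -/
def HereditaryBoxConcl (e : S.Edge) : Prop :=
  ∃ f, S.FromBox f ∧ Relation.ReflTransGen S.SyncStepE f e

/-- A ready cut: a cut at depth 0 neither of whose premisses is a hereditary
conclusion of a box. -/
def ReadyCut (c : S.Node) : Prop :=
  S.sort c = .cut ∧ S.box c = none ∧ ∀ e ∈ S.prems c, ¬ S.HereditaryBoxConcl e

/-! ## Polarized paths and the order on links -/

/-- A node is polarized when all of its conclusions are polarized. -/
def PolarizedNode (n : S.Node) : Prop := ∀ e ∈ S.concls n, (S.typ e).Polarized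

/-- A single step of a polarized path from link `a` to link `b` along the
polarized edge `e`: downwards on positive edges, upwards on negative edges,
connecting polarized nodes and never entering boxes. -/
def PolStep (e : S.Edge) (a b : S.Node) : Prop :=
  S.box a = none ∧ S.box b = none ∧ S.PolarizedNode a ∧ S.PolarizedNode b ∧
  (((S.typ e).Positive ∧ S.src e = a ∧ S.tgt e = some b) ∨
   ((S.typ e).Negative ∧ S.tgt e = some a ∧ S.src e = b))

/-- `a ≺ b` : there is a (simple) polarized path from `a` to `b`. -/
def prec (a b : S.Node) : Prop :=
  ∃ (k : ℕ) (v : Fin (k + 2) → S.Node) (e : Fin (k + 1) → S.Edge),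
    v 0 = a ∧ v (Fin.last _) = b ∧
    Function.Injective v ∧ Function.Injective e ∧
    ∀ i : Fin (k + 1), S.PolStep (e i) (v i.castSucc) (v i.succ)

/-- SMLL⁰ structures: no unit links (hence no boxes). -/
def UnitFree : Prop := ∀ n : S.Node, S.sort n ≠ .one ∧ S.sort n ≠ .bot

/-- Closed structures: no `⊥` occurs in the conclusions. -/
def Closed : Prop := ∀ e : S.Edge, S.tgt e = none → (S.typ e).hasBotB = false

end Struct

/-! ## Reduction -/

/-- A partial injection `j` whose (some-)range is exactly `X`. -/
def PInjOnto {α β : Type*} (j : α → Option β) (X : Set β) : Prop :=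
  (∀ a a' b, j a = some b → j a' = some b → a = a') ∧
  (∀ a b, j a = some b → b ∈ X) ∧
  (∀ b ∈ X, ∃ a, j a = some b)

/-- `j` is total. -/
def JTotal {α β : Type*} (j : α → Option β) : Prop := ∀ a, j a ≠ none

/-- The structures `Q` and `R` agree, along the correspondences `jN`, `jE`,
on all edges outside `XE` and all nodes outside `XN`. -/
def AgreesOn (Q R : Struct) (jN : Q.Node → Option R.Node)
    (jE : Q.Edge → Option R.Edge) (XE : Set R.Edge) (XN : Set R.Node) : Prop :=
  (∀ x y, jE x = some y → y ∉ XE →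
    Q.typ x = R.typ y ∧ jN (Q.src x) = some (R.src y) ∧
    (Q.tgt x).bind jN = R.tgt y ∧ Q.pIdx x = R.pIdx y ∧ Q.cIdx x = R.cIdx y) ∧
  (∀ n m, jN n = some m → m ∉ XN →
    Q.sort n = R.sort m ∧ (Q.box n).bind jN = R.box m ∧
    (∀ b b', jN b = some b' → (b ∈ Q.boxes n ↔ b' ∈ R.boxes m)))

/-- The `ax/cut` step: a cut between a conclusion `v` of an axiom `a` and the
dual premiss is removed together with the axiom; the remaining conclusion `u`
of the axiom and the remaining premiss `q` of the cut are merged. -/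
def AxCutStep (R Q : Struct) : Prop :=
  ∃ (a c : R.Node) (v u q : R.Edge),
    R.sort a = .ax ∧ R.sort c = .cut ∧ R.box a = none ∧ R.box c = none ∧
    v ≠ u ∧ v ≠ q ∧ u ≠ q ∧
    R.concls a = {v, u} ∧ R.prems c = {v, q} ∧
    ∃ (jN : Q.Node → Option R.Node) (jE : Q.Edge → Option R.Edge),
      JTotal jN ∧ JTotal jE ∧
      PInjOnto jN {n | n ≠ a ∧ n ≠ c} ∧
      PInjOnto jE {x | x ≠ v ∧ x ≠ u} ∧
      AgreesOn Q R jN jE {q} ∅ ∧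
      (∀ x, jE x = some q →
        Q.typ x = R.typ q ∧ jN (Q.src x) = some (R.src q) ∧
        (Q.tgt x).bind jN = R.tgt u ∧ Q.pIdx x = R.pIdx u ∧ Q.cIdx x = R.cIdx q)

/-- The `⊗/⅋` step: a cut between `A ⊗ B` and `A⊥ ⅋ B⊥` is replaced by two
cuts between the respective premisses. -/
def TensParrStep (R Q : Struct) : Prop :=
  ∃ (c t p : R.Node) (s s' a1 a2 b1 b2 : R.Edge),
    R.sort c = .cut ∧ R.sort t = .tens ∧ R.sort p = .parr ∧
    R.box c = none ∧ R.box t = none ∧ R.box p = none ∧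
    s ≠ s' ∧ R.prems c = {s, s'} ∧ R.concls t = {s} ∧ R.concls p = {s'} ∧
    a1 ≠ a2 ∧ R.prems t = {a1, a2} ∧ R.pIdx a1 = 0 ∧ R.pIdx a2 = 1 ∧
    b1 ≠ b2 ∧ R.prems p = {b1, b2} ∧ R.pIdx b1 = 0 ∧ R.pIdx b2 = 1 ∧
    ∃ (jN : Q.Node → Option R.Node) (jE : Q.Edge → Option R.Edge) (c' : Q.Node),
      JTotal jE ∧
      PInjOnto jN {n | n ≠ t ∧ n ≠ p} ∧
      PInjOnto jE {x | x ≠ s ∧ x ≠ s'} ∧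
      jN c' = none ∧ (∀ n, jN n = none → n = c') ∧
      Q.sort c' = .cut ∧ Q.box c' = none ∧ Q.boxes c' = ∅ ∧
      AgreesOn Q R jN jE {a1, a2, b1, b2} ∅ ∧
      (∀ x y, jE x = some y → y = a1 ∨ y = b1 →
        Q.typ x = R.typ y ∧ jN (Q.src x) = some (R.src y) ∧
        (Q.tgt x).bind jN = some c ∧ Q.cIdx x = R.cIdx y) ∧
      (∀ x y, jE x = some y → y = a2 ∨ y = b2 →
        Q.typ x = R.typ y ∧ jN (Q.src x) = some (R.src y) ∧
        Q.tgt x = some c' ∧ Q.cIdx x = R.cIdx y)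

/-- Commutation of a sync link with a `⊗` or `⅋` link: the sync link acting
on the conclusion `z` of the multiplicative link `m` (with corresponding sync
conclusion `w`) is pushed above `m`, now acting on the two premisses `x`, `y`
of `m` via two fresh sync positions (indices `i₁`, `i₂`) with fresh edges
`x'`, `y'`. -/
def SyncMultStep (R Q : Struct) : Prop :=
  ∃ (l m : R.Node) (z w x y : R.Edge) (i₁ i₂ : ℕ),
    R.sort l = .sync ∧ (R.sort m = .tens ∨ R.sort m = .parr) ∧
    R.box l = none ∧ R.box m = none ∧
    R.src z = m ∧ R.tgt z = some l ∧ R.src w = l ∧ R.cIdx w = R.pIdx z ∧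
    x ≠ y ∧ R.prems m = {x, y} ∧ R.pIdx x = 0 ∧ R.pIdx y = 1 ∧
    i₁ ≠ i₂ ∧
    (∀ e, R.tgt e = some l → R.pIdx e ≠ i₁ ∧ R.pIdx e ≠ i₂) ∧
    (∀ e, R.src e = l → R.cIdx e ≠ i₁ ∧ R.cIdx e ≠ i₂) ∧
    ∃ (jN : Q.Node → Option R.Node) (jE : Q.Edge → Option R.Edge)
      (l' m' : Q.Node) (x' y' : Q.Edge),
      JTotal jN ∧ PInjOnto jN Set.univ ∧
      PInjOnto jE {e | e ≠ z} ∧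
      jN l' = some l ∧ jN m' = some m ∧
      x' ≠ y' ∧ jE x' = none ∧ jE y' = none ∧ (∀ e, jE e = none → e = x' ∨ e = y') ∧
      AgreesOn Q R jN jE {x, y, w} ∅ ∧
      (∀ e, jE e = some x →
        Q.typ e = R.typ x ∧ jN (Q.src e) = some (R.src x) ∧
        Q.tgt e = some l' ∧ Q.pIdx e = i₁ ∧ Q.cIdx e = R.cIdx x) ∧
      (∀ e, jE e = some y →
        Q.typ e = R.typ y ∧ jN (Q.src e) = some (R.src y) ∧
        Q.tgt e = some l' ∧ Q.pIdx e = i₂ ∧ Q.cIdx e = R.cIdx y) ∧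
      (∀ e, jE e = some w →
        Q.typ e = R.typ w ∧ Q.src e = m' ∧
        (Q.tgt e).bind jN = R.tgt w ∧ Q.pIdx e = R.pIdx w ∧ Q.cIdx e = R.cIdx w) ∧
      (Q.typ x' = R.typ x ∧ Q.src x' = l' ∧ Q.tgt x' = some m' ∧
        Q.pIdx x' = 0 ∧ Q.cIdx x' = i₁) ∧
      (Q.typ y' = R.typ y ∧ Q.src y' = l' ∧ Q.tgt y' = some m' ∧
        Q.pIdx y' = 1 ∧ Q.cIdx y' = i₂)

/-- Commutation of a sync link with an axiom: a sync link acting on a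
positive conclusion `u` of an axiom (with corresponding conclusion `u'`) is
moved to the axiom's other conclusion `v` (of type `P⊥`), with a fresh sync
position of index `j` and fresh edge `v'`. -/
def SyncAxStep (R Q : Struct) : Prop :=
  ∃ (l a : R.Node) (u u' v : R.Edge) (j : ℕ),
    R.sort l = .sync ∧ R.sort a = .ax ∧ R.box l = none ∧ R.box a = none ∧
    (R.typ u).Positive ∧ u ≠ v ∧ R.concls a = {u, v} ∧
    R.tgt u = some l ∧ R.src u' = l ∧ R.cIdx u' = R.pIdx u ∧ u' ≠ u ∧ u' ≠ v ∧
    (∀ e, R.tgt e = some l → R.pIdx e ≠ j) ∧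
    (∀ e, R.src e = l → R.cIdx e ≠ j) ∧
    ∃ (jN : Q.Node → Option R.Node) (jE : Q.Edge → Option R.Edge)
      (l' a' : Q.Node) (v' : Q.Edge),
      JTotal jN ∧ PInjOnto jN Set.univ ∧ PInjOnto jE {e | e ≠ u} ∧
      jN l' = some l ∧ jN a' = some a ∧
      jE v' = none ∧ (∀ e, jE e = none → e = v') ∧
      AgreesOn Q R jN jE {u', v} ∅ ∧
      (∀ e, jE e = some u' →
        Q.typ e = R.typ u' ∧ Q.src e = a' ∧ Q.cIdx e = R.cIdx u ∧
        (Q.tgt e).bind jN = R.tgt u' ∧ Q.pIdx e = R.pIdx u') ∧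
      (∀ e, jE e = some v →
        Q.typ e = R.typ v ∧ Q.src e = a' ∧ Q.cIdx e = R.cIdx v ∧
        Q.tgt e = some l' ∧ Q.pIdx e = j) ∧
      (Q.typ v' = R.typ v ∧ Q.src v' = l' ∧ Q.cIdx v' = j ∧
        (Q.tgt v').bind jN = R.tgt v ∧ Q.pIdx v' = R.pIdx v)

/-- Commutation of a sync link with a cut: a sync link acting on the premiss
`d'` (of negative type `P⊥`) of a cut is moved to the other premiss `q`. -/
def SyncCutStep (R Q : Struct) : Prop :=
  ∃ (l c : R.Node) (d d' q : R.Edge) (j : ℕ),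
    R.sort l = .sync ∧ R.sort c = .cut ∧ R.box l = none ∧ R.box c = none ∧
    (R.typ d').Negative ∧
    R.src d' = l ∧ R.tgt d' = some c ∧ R.tgt d = some l ∧ R.pIdx d = R.cIdx d' ∧
    d' ≠ q ∧ d ≠ q ∧ d ≠ d' ∧ R.prems c = {d', q} ∧
    (∀ e, R.tgt e = some l → R.pIdx e ≠ j) ∧
    (∀ e, R.src e = l → R.cIdx e ≠ j) ∧
    ∃ (jN : Q.Node → Option R.Node) (jE : Q.Edge → Option R.Edge)
      (l' c' : Q.Node) (q' : Q.Edge),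
      JTotal jN ∧ PInjOnto jN Set.univ ∧ PInjOnto jE {e | e ≠ d'} ∧
      jN l' = some l ∧ jN c' = some c ∧
      jE q' = none ∧ (∀ e, jE e = none → e = q') ∧
      AgreesOn Q R jN jE {d, q} ∅ ∧
      (∀ e, jE e = some d →
        Q.typ e = R.typ d ∧ jN (Q.src e) = some (R.src d) ∧ Q.cIdx e = R.cIdx d ∧
        Q.tgt e = some c' ∧ Q.pIdx e = R.pIdx d') ∧
      (∀ e, jE e = some q →
        Q.typ e = R.typ q ∧ jN (Q.src e) = some (R.src q) ∧ Q.cIdx e = R.cIdx q ∧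
        Q.tgt e = some l' ∧ Q.pIdx e = j) ∧
      (Q.typ q' = R.typ q ∧ Q.src q' = l' ∧ Q.cIdx q' = j ∧
        Q.tgt q' = some c' ∧ Q.pIdx q' = R.pIdx q)

/-- Sync elimination: a sync link all of whose premisses are conclusions of
`one`-links is erased, merging each premiss with its corresponding
conclusion. -/
def SyncElimStep (R Q : Struct) : Prop :=
  ∃ l : R.Node, R.sort l = .sync ∧ R.box l = none ∧
    (∀ e ∈ R.prems l, R.sort (R.src e) = .one) ∧
    ∃ (jN : Q.Node → Option R.Node) (jE : Q.Edge → Option R.Edge),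
      JTotal jN ∧ JTotal jE ∧
      PInjOnto jN {n | n ≠ l} ∧
      PInjOnto jE {e | R.src e ≠ l} ∧
      AgreesOn Q R jN jE {e | R.tgt e = some l} ∅ ∧
      (∀ x e f, jE x = some e → R.tgt e = some l → R.src f = l →
        R.cIdx f = R.pIdx e →
        Q.typ x = R.typ e ∧ jN (Q.src x) = some (R.src e) ∧
        (Q.tgt x).bind jN = R.tgt f ∧ Q.pIdx x = R.pIdx f ∧ Q.cIdx x = R.cIdx e)

/-- The `one/⊥` step (box opening): a cut between the conclusion `o` of a
`one`-link `n₁` and the lock `k` of a box `b` removes the cut, the `one`-link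
and the `bot`-link, and opens the box. -/
def OneBotStep (R Q : Struct) : Prop :=
  ∃ (c n₁ b : R.Node) (o k : R.Edge),
    R.sort c = .cut ∧ R.sort n₁ = .one ∧ R.sort b = .bot ∧
    R.box c = none ∧ R.box n₁ = none ∧ R.box b = none ∧
    o ≠ k ∧ R.prems c = {o, k} ∧ R.src o = n₁ ∧ R.src k = b ∧
    ∃ (jN : Q.Node → Option R.Node) (jE : Q.Edge → Option R.Edge),
      JTotal jN ∧ JTotal jE ∧
      PInjOnto jN {n | n ≠ c ∧ n ≠ n₁ ∧ n ≠ b} ∧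
      PInjOnto jE {e | e ≠ o ∧ e ≠ k} ∧
      (∀ x e, jE x = some e →
        Q.typ x = R.typ e ∧ jN (Q.src x) = some (R.src e) ∧
        (Q.tgt x).bind jN = R.tgt e ∧ Q.pIdx x = R.pIdx e ∧ Q.cIdx x = R.cIdx e) ∧
      (∀ n m, jN n = some m →
        Q.sort n = R.sort m ∧
        (∀ b₀ b₀', jN b₀ = some b₀' → (b₀ ∈ Q.boxes n ↔ b₀' ∈ R.boxes m ∧ b₀' ≠ b)) ∧
        (R.box m = some b → Q.box n = none) ∧
        (R.box m ≠ some b → (Q.box n).bind jN = R.box m))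

/-- The sync-commutation and sync-elimination steps. -/
def SyncRed (R Q : Struct) : Prop :=
  SyncMultStep R Q ∨ SyncAxStep R Q ∨ SyncCutStep R Q ∨ SyncElimStep R Q

/-- The reduction relation `→` on SMLL structures (applied at depth 0 only). -/
def Step (R Q : Struct) : Prop :=
  AxCutStep R Q ∨ TensParrStep R Q ∨ SyncRed R Q ∨ OneBotStep R Q

/-- Isomorphism of structures. -/
def Isom (R Q : Struct) : Prop :=
  ∃ (en : R.Node ≃ Q.Node) (ee : R.Edge ≃ Q.Edge),
    (∀ e, Q.typ (ee e) = R.typ e) ∧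
    (∀ e, Q.src (ee e) = en (R.src e)) ∧
    (∀ e, Q.tgt (ee e) = (R.tgt e).map en) ∧
    (∀ e, Q.pIdx (ee e) = R.pIdx e) ∧
    (∀ e, Q.cIdx (ee e) = R.cIdx e) ∧
    (∀ n, Q.sort (en n) = R.sort n) ∧
    (∀ n, Q.box (en n) = (R.box n).map en) ∧
    (∀ n, Q.boxes (en n) = (R.boxes n).image en)

/-! ## The SIAM: a synchronous interaction abstract machine -/

namespace Struct

variable (S : Struct)

/-- The value of a token: either an occurrence of an atom on an edge, or a
position `(e, i)` on the lock `e` of a box (`BOTBOX`). -/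
inductive PosVal (S : Struct) : Type
  | atom : S.Edge → Formula.Addr → PosVal S
  | lock : S.Edge → ℕ → PosVal S

/-- Initial positions: negative atom occurrences in the conclusions. -/
def InitPos (p : S.Edge × Formula.Addr) : Prop :=
  S.tgt p.1 = none ∧ Formula.NegOcc (S.typ p.1) p.2

/-- Final positions: positive atom occurrences in the conclusions. -/
def FinPos (p : S.Edge × Formula.Addr) : Prop :=
  S.tgt p.1 = none ∧ Formula.PosOcc (S.typ p.1) p.2

/-- One positions: conclusions of `one`-links. -/
def OnePos (p : S.Edge × Formula.Addr) : Prop :=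
  S.sort (S.src p.1) = .one ∧ p.2 = []

/-- Valid token values: genuine atom occurrences, or positions on the lock of
a box. -/
def ValidVal : PosVal S → Prop
  | .atom e m => Formula.AtomOcc (S.typ e) m
  | .lock e _ => S.sort (S.src e) = .bot

end Struct

/-- A state of the SIAM machine `M_S`: a (partial) function from
`INIT(S) ∪ L` (with `L ⊆ ONES(S)`) to the positions of `S`; it records, for
each token, its origin and its current position. -/
structure SState (S : Struct) where
  f : S.Edge × Formula.Addr → Option (Struct.PosVal S)
  dom_subset : ∀ p, f p ≠ none → S.InitPos p ∨ S.OnePos p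
  init_total : ∀ p, S.InitPos p → f p ≠ none
  val_valid : ∀ p v, f p = some v → S.ValidVal v

namespace Struct

variable (S : Struct)

/-- The box `b` is unlocked in state `T`: some token sits on its lock. -/
def Unlocked (T : SState S) (b : S.Node) : Prop :=
  ∃ p e i, T.f p = some (.lock e i) ∧ S.src e = b

/-- A link is active: all the boxes containing it are unlocked. -/
def Active (T : SState S) (n : S.Node) : Prop :=
  ∀ b ∈ S.boxes n, S.Unlocked T b

end Struct

open Classical in
/-- The initial state `I_S`: the identity on the initial positions. -/
noncomputable def initState (S : Struct) : SState S where
  f := fun p => if S.InitPos p then some (.atom p.1 p.2) else none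
  dom_subset := by
    intro p hp
    by_cases h : S.InitPos p
    · exact Or.inl h
    · simp [h] at hp
  init_total := by intro p hp; simp [hp]
  val_valid := by
    intro p v hv
    by_cases h : S.InitPos p
    · simp only [if_pos h, Option.some.injEq] at hv
      subst hv
      exact h.2.atomOcc
    · simp [h] at hv

/-- The transition relation of the SIAM.  Tokens on negative atom occurrences
move upwards, tokens on positive atom occurrences move downwards; all tokens
cross a sync link simultaneously, when each of its in-edges is saturated;
active `one`-links may spawn a token; a token reaching the lock of a box
unlocks it.  Tokens may only cross active links (so they can enter a box only
when it is unlocked). -/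
inductive STrans (S : Struct) : SState S → SState S → Prop
  | axUp {T T' : SState S} {p : S.Edge × Formula.Addr} {e e' : S.Edge}
      {m : Formula.Addr} {a : S.Node} :
      T.f p = some (.atom e m) →
      Formula.NegOcc (S.typ e) m →
      S.src e = a → S.sort a = .ax → S.Active T a →
      S.src e' = a → e' ≠ e →
      (∀ q, q ≠ p → T'.f q = T.f q) →
      T'.f p = some (.atom e' m) →
      STrans S T T'
  | cutDown {T T' : SState S} {p : S.Edge × Formula.Addr} {e e' : S.Edge}
      {m : Formula.Addr} {c : S.Node} :
      T.f p = some (.atom e m) →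
      Formula.PosOcc (S.typ e) m →
      S.tgt e = some c → S.sort c = .cut → S.Active T c →
      S.tgt e' = some c → e' ≠ e →
      (∀ q, q ≠ p → T'.f q = T.f q) →
      T'.f p = some (.atom e' m) →
      STrans S T T'
  | multDown {T T' : SState S} {p : S.Edge × Formula.Addr} {e g : S.Edge}
      {m : Formula.Addr} {n : S.Node} {b : Bool} :
      T.f p = some (.atom e m) →
      Formula.PosOcc (S.typ e) m →
      S.tgt e = some n → (S.sort n = .tens ∨ S.sort n = .parr) → S.Active T n →
      S.src g = n →
      S.pIdx e = (if b then 1 else 0) →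
      (∀ q, q ≠ p → T'.f q = T.f q) →
      T'.f p = some (.atom g (b :: m)) →
      STrans S T T'
  | multUp {T T' : SState S} {p : S.Edge × Formula.Addr} {e g : S.Edge}
      {m : Formula.Addr} {n : S.Node} {b : Bool} :
      T.f p = some (.atom g (b :: m)) →
      Formula.NegOcc (S.typ g) (b :: m) →
      S.src g = n → (S.sort n = .tens ∨ S.sort n = .parr) → S.Active T n →
      S.tgt e = some n →
      S.pIdx e = (if b then 1 else 0) →
      (∀ q, q ≠ p → T'.f q = T.f q) →
      T'.f p = some (.atom e m) →
      STrans S T T'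
  | lockTok {T T' : SState S} {p : S.Edge × Formula.Addr} {e : S.Edge}
      {b' : S.Node} :
      T.f p = some (.atom e []) →
      S.typ e = .bot →
      S.src e = b' → S.sort b' = .bot → S.Active T b' →
      (∀ q, q ≠ p → T'.f q = T.f q) →
      T'.f p = some (.lock e 0) →
      STrans S T T'
  | oneSpawn {T T' : SState S} {n : S.Node} {e : S.Edge} :
      S.sort n = .one → S.Active T n → S.src e = n →
      T.f (e, []) = none →
      (∀ q, q ≠ (e, []) → T'.f q = T.f q) →
      T'.f (e, []) = some (.atom e []) →
      STrans S T T'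
  | syncCross {T T' : SState S} {l : S.Node} :
      S.sort l = .sync → S.Active T l →
      (∃ q e m, T.f q = some (.atom e m) ∧
        ((S.tgt e = some l ∧ (S.typ e).Positive) ∨
         (S.src e = l ∧ (S.typ e).Negative))) →
      (∀ e, ((S.tgt e = some l ∧ (S.typ e).Positive) ∨
             (S.src e = l ∧ (S.typ e).Negative)) →
        ∀ m, Formula.AtomOcc (S.typ e) m → ∃ q, T.f q = some (.atom e m)) →
      (∀ q e m, T.f q = some (.atom e m) → S.tgt e = some l → (S.typ e).Positive →
        ∃ e', S.src e' = l ∧ S.cIdx e' = S.pIdx e ∧ T'.f q = some (.atom e' m)) →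
      (∀ q e m, T.f q = some (.atom e m) → S.src e = l → (S.typ e).Negative →
        ∃ e', S.tgt e' = some l ∧ S.pIdx e' = S.cIdx e ∧ T'.f q = some (.atom e' m)) →
      (∀ q, (∀ e m, T.f q = some (.atom e m) →
          ¬(S.tgt e = some l ∧ (S.typ e).Positive) ∧
          ¬(S.src e = l ∧ (S.typ e).Negative)) →
        T'.f q = T.f q) →
      STrans S T T'

/-- A final state: its image consists of all the final positions together
with positions on the locks of boxes. -/
def SState.Final {S : Struct} (T : SState S) : Prop :=
  (∀ q v, T.f q = some v →
    (∃ e m, v = .atom e m ∧ S.FinPos (e, m)) ∨ (∃ e i, v = .lock e i)) ∧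
  (∀ e m, S.FinPos (e, m) → ∃ q, T.f q = some (.atom e m))

/-- The machine of `S` deadlocks: some maximal transition sequence from the
initial state ends in a non-final state. -/
def Deadlocks (S : Struct) : Prop :=
  ∃ T : SState S, Relation.ReflTransGen (STrans S) (initState S) T ∧
    (∀ T', ¬ STrans S T T') ∧ ¬ T.Final

/-- The machine of `S` is deadlock free: every maximal transition sequence
from the initial state ends in a final state. -/
def DeadlockFree (S : Struct) : Prop :=
  ∀ T : SState S, Relation.ReflTransGen (STrans S) (initState S) T →
    (∀ T', ¬ STrans S T T') → T.Final

/-! ## The closure of a net -/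

/-- A structure with a designated (main) conclusion. -/
structure PNet : Type 1 where
  S : Struct
  main : S.Edge

/-- The net consisting of a single `one`-link. -/
def oneNet : PNet where
  S :=
    { Edge := Unit
      Node := Unit
      edgeFintype := inferInstance
      nodeFintype := inferInstance
      edgeDecEq := inferInstance
      nodeDecEq := inferInstance
      typ := fun _ => .one
      sort := fun _ => .one
      src := fun _ => ()
      tgt := fun _ => none
      pIdx := fun _ => 0
      cIdx := fun _ => 0
      box := fun _ => none
      boxes := fun _ => ∅ }
  main := ()

/-- The net consisting of a single axiom of conclusions `A⊥, A`, with main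
conclusion `A`. -/
def axNet (A : Formula) : PNet where
  S :=
    { Edge := Bool
      Node := Unit
      edgeFintype := inferInstance
      nodeFintype := inferInstance
      edgeDecEq := inferInstance
      nodeDecEq := inferInstance
      typ := fun e => if e then A else A.dual
      sort := fun _ => .ax
      src := fun _ => ()
      tgt := fun _ => none
      pIdx := fun _ => 0
      cIdx := fun e => if e then 1 else 0
      box := fun _ => none
      boxes := fun _ => ∅ }
  main := true

/-- Joining the main conclusions of two nets by a binary link of sort `s`
and conclusion type `C`. -/
def joinNet (s : LinkSort) (C : Formula) (P Q : PNet) : PNet where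
  S :=
    { Edge := Option (P.S.Edge ⊕ Q.S.Edge)
      Node := Option (P.S.Node ⊕ Q.S.Node)
      edgeFintype := inferInstance
      nodeFintype := inferInstance
      edgeDecEq := inferInstance
      nodeDecEq := inferInstance
      typ := fun e =>
        match e with
        | none => C
        | some (.inl x) => P.S.typ x
        | some (.inr y) => Q.S.typ y
      sort := fun n =>
        match n with
        | none => s
        | some (.inl x) => P.S.sort x
        | some (.inr y) => Q.S.sort y
      src := fun e =>
        match e with
        | none => none
        | some (.inl x) => some (.inl (P.S.src x))
        | some (.inr y) => some (.inr (Q.S.src y))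
      tgt := fun e =>
        match e with
        | none => none
        | some (.inl x) =>
            if x = P.main then some none
            else (P.S.tgt x).map fun n => some (.inl n)
        | some (.inr y) =>
            if y = Q.main then some none
            else (Q.S.tgt y).map fun n => some (.inr n)
      pIdx := fun e =>
        match e with
        | none => 0
        | some (.inl x) => if x = P.main then 0 else P.S.pIdx x
        | some (.inr y) => if y = Q.main then 1 else Q.S.pIdx y
      cIdx := fun e =>
        match e with
        | none => 0
        | some (.inl x) => P.S.cIdx x
        | some (.inr y) => Q.S.cIdx y
      box := fun n =>
        match n with
        | none => none
        | some (.inl x) => (P.S.box x).map fun m => some (.inl m)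
        | some (.inr y) => (Q.S.box y).map fun m => some (.inr m)
      boxes := fun n =>
        match n with
        | none => ∅
        | some (.inl x) => (P.S.boxes x).image fun m => some (.inl m)
        | some (.inr y) => (Q.S.boxes y).image fun m => some (.inr m) }
  main := none

/-- The net `R°(A)`, by induction on `A`: it has conclusions `Γ, A` with no
occurrence of `⊥` in `Γ`, and main conclusion `A`. -/
def circNet : Formula → PNet
  | .one => oneNet
  | .bot => axNet .bot
  | .var n => axNet (.var n)
  | .covar n => axNet (.covar n)
  | .tens A B => joinNet .tens (.tens A B) (circNet A) (circNet B)
  | .parr A B => joinNet .parr (.parr A B) (circNet A) (circNet B)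

/-- The conclusions of `R` containing an occurrence of `⊥`. -/
abbrev BadC (R : Struct) :=
  {e : R.Edge // R.tgt e = none ∧ (R.typ e).hasBotB = true}

/-- The closure `R̂` of `R`: each conclusion `A` of `R` containing `⊥` is cut
against the main conclusion of a copy of `R°(A⊥)`. -/
def netClosure (R : Struct) : Struct where
  Edge := R.Edge ⊕ Σ e : BadC R, (circNet (R.typ e.val).dual).S.Edge
  Node := R.Node ⊕ ((Σ e : BadC R, (circNet (R.typ e.val).dual).S.Node) ⊕ BadC R)
  edgeFintype := inferInstance
  nodeFintype := inferInstance
  edgeDecEq := inferInstance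
  nodeDecEq := inferInstance
  typ := fun e =>
    match e with
    | .inl e => R.typ e
    | .inr ⟨b, x⟩ => (circNet (R.typ b.val).dual).S.typ x
  sort := fun n =>
    match n with
    | .inl n => R.sort n
    | .inr (.inl ⟨b, x⟩) => (circNet (R.typ b.val).dual).S.sort x
    | .inr (.inr _) => .cut
  src := fun e =>
    match e with
    | .inl e => .inl (R.src e)
    | .inr ⟨b, x⟩ => .inr (.inl ⟨b, (circNet (R.typ b.val).dual).S.src x⟩)
  tgt := fun e =>
    match e with
    | .inl e =>
        if h : R.tgt e = none ∧ (R.typ e).hasBotB = true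
        then some (.inr (.inr ⟨e, h⟩))
        else (R.tgt e).map Sum.inl
    | .inr ⟨b, x⟩ =>
        if x = (circNet (R.typ b.val).dual).main
        then some (.inr (.inr b))
        else ((circNet (R.typ b.val).dual).S.tgt x).map fun n => .inr (.inl ⟨b, n⟩)
  pIdx := fun e =>
    match e with
    | .inl e => R.pIdx e
    | .inr ⟨b, x⟩ =>
        if x = (circNet (R.typ b.val).dual).main then 1
        else (circNet (R.typ b.val).dual).S.pIdx x
  cIdx := fun e =>
    match e with
    | .inl e => R.cIdx e
    | .inr ⟨b, x⟩ => (circNet (R.typ b.val).dual).S.cIdx x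
  box := fun n =>
    match n with
    | .inl n => (R.box n).map Sum.inl
    | .inr (.inl ⟨b, x⟩) =>
        ((circNet (R.typ b.val).dual).S.box x).map fun m => .inr (.inl ⟨b, m⟩)
    | .inr (.inr _) => none
  boxes := fun n =>
    match n with
    | .inl n => (R.boxes n).image Sum.inl
    | .inr (.inl ⟨b, x⟩) =>
        ((circNet (R.typ b.val).dual).S.boxes x).image fun m => .inr (.inl ⟨b, m⟩)
    | .inr (.inr _) => ∅

/-!
Let `c` be a cut of a closed net `R`. Start at `c`, or at the lock of an outermost box if `c`
lies in a box, and search the `0`-graph for a redex: go down along edges whose type contains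
`⊥` (by closedness such an edge is never a conclusion of `R`), and go up along premisses of cuts
and of sync links towards boxes, sync links and axioms. Wherever the search cannot go on, some
reduction step applies. The search never leaves a `⅋`-link through a premiss, nor a sync link
through an out-edge, so a search running in circles would contain a switching cycle, which
correctness forbids. As `R` is finite, the search stops: `R` is not in normal form.
-/

/-! ## Simple cycles in closed walks -/

theorem Relation.TransGen.exists_chain {α : Type*} {r : α → α → Prop} {a b : α}
    (h : Relation.TransGen r a b) :
    ∃ n, 0 < n ∧ ∃ f : ℕ → α, f 0 = a ∧ f n = b ∧ ∀ i < n, r (f i) (f (i + 1)) := by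
  induction h using Relation.TransGen.head_induction_on with
  | single hab => exact ⟨1, one_pos, fun i => if i = 0 then _ else _, rfl, rfl, by simpa⟩
  | head hac _ ih =>
    obtain ⟨n, -, f, hf0, hfn, hf⟩ := ih
    refine ⟨n + 1, n.succ_pos, fun i => if i = 0 then _ else f (i - 1), rfl, by simpa, ?_⟩
    rintro (_ | i) hi
    · simpa [hf0]
    · simpa using hf i (by omega)

theorem Finite.exists_forall_not_rel {α : Type*} [Finite α] [Nonempty α] {r : α → α → Prop}
    (h : ∀ a, ¬ Relation.TransGen r a a) : ∃ a, ∀ b, ¬ r a b := by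
  let s : α → α → Prop := fun a b => Relation.TransGen r b a
  have : IsTrans α s := ⟨fun _ _ _ hab hbc => hbc.trans hab⟩
  have : Std.Irrefl s := ⟨h⟩
  obtain ⟨a, -, ha⟩ :=
    (Finite.wellFounded_of_trans_of_irrefl s).has_min Set.univ Set.univ_nonempty
  exact ⟨a, fun b hab => ha b trivial (.single hab)⟩

section CyclicWalk

variable {α V E : Type*} (tail head : α → V) (edge : α → E)

/-- `α` stands for the traversals of the edges of a multigraph with vertices `V` and edges `E`;
`b` may follow `a` in a walk that never immediately reuses an edge. -/
def WalkAdj (a b : α) : Prop := head a = tail b ∧ edge a ≠ edge b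

/-- The closed walk `f 0, …, f (n - 1)`, `f 0`. -/
def IsClosedWalk (n : ℕ) (f : ℕ → α) : Prop :=
  0 < n ∧ (∀ i, i + 1 < n → WalkAdj tail head edge (f i) (f (i + 1))) ∧
    WalkAdj tail head edge (f (n - 1)) (f 0)

variable {tail head edge}

namespace WalkAdj

theorem exists_minimal_closedWalk {a : α} (h : Relation.TransGen (WalkAdj tail head edge) a a) :
    ∃ n f, IsClosedWalk tail head edge n f ∧
      ∀ m g, IsClosedWalk tail head edge m g → n ≤ m := by
  classical
  have hex : ∃ n f, IsClosedWalk tail head edge n f := by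
    obtain ⟨n, hn, f, hf0, hfn, hf⟩ := h.exists_chain
    refine ⟨n, f, hn, fun i hi => hf i (by omega), ?_⟩
    have := hf (n - 1) (by omega)
    rwa [Nat.sub_add_cancel hn, hfn, ← hf0] at this
  exact ⟨_, (Nat.find_spec hex).choose, (Nat.find_spec hex).choose_spec,
    fun m g hm => Nat.find_min' hex ⟨g, hm⟩⟩

/-- In a closed walk of minimal length `n`, no vertex is visited twice: a repetition would
shortcut it, unless the shortcut closes along the edge it starts with, in which case the walk
turns back on that edge and the repetition moves closer. -/
theorem tail_ne_of_minimal (hloop : ∀ a, tail a ≠ head a)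
    (hrev : ∀ a b, a ≠ b → edge a = edge b → tail b = head a) {n : ℕ}
    (hmin : ∀ m f, IsClosedWalk tail head edge m f → n ≤ m) :
    ∀ d, 0 < d → d < n → ∀ f : ℕ → α,
      (∀ i < d, WalkAdj tail head edge (f i) (f (i + 1))) → tail (f d) ≠ tail (f 0) := by
  intro d
  induction d using Nat.strong_induction_on with
  | _ d ih =>
    intro hd hdn f hf htail
    obtain rfl | hd2 : d = 1 ∨ 2 ≤ d := by omega
    · exact hloop (f 0) ((hf 0 one_pos).1.trans htail).symm
    by_cases hedge : edge (f (d - 1)) = edge (f 0)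
    · by_cases hsame : f (d - 1) = f 0
      · exact ih (d - 1) (by omega) (by omega) (by omega) f (fun i hi => hf i (by omega))
          (by rw [hsame])
      obtain rfl | hd3 : d = 2 ∨ 3 ≤ d := by omega
      · exact (hf 0 (by omega)).2 hedge.symm
      have hback : tail (f (d - 1)) = tail (f 1) :=
        (hrev _ _ (Ne.symm hsame) hedge.symm).trans (hf 0 (by omega)).1
      exact ih (d - 2) (by omega) (by omega) (by omega) (fun i => f (i + 1))
          (fun i hi => hf (i + 1) (by omega)) (by rwa [show d - 2 + 1 = d - 1 by omega])
    · have hclosed : IsClosedWalk tail head edge d f :=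
        ⟨hd, fun i hi => hf i (by omega), ⟨by rw [(hf (d - 1) (by omega)).1,
          Nat.sub_add_cancel hd, htail], hedge⟩⟩
      exact absurd (hmin d f hclosed) (by omega)

theorem injective_edge_of_injective_tail
    (hrev : ∀ a b, a ≠ b → edge a = edge b → tail b = head a) {k : ℕ}
    {g : Fin (k + 1) → α} (hg : ∀ i, WalkAdj tail head edge (g i) (g (i + 1)))
    (htail : Function.Injective (tail ∘ g)) :
    Function.Injective (edge ∘ g) := by
  intro i j hij
  by_contra hne
  have hback : tail (g j) = tail (g (i + 1)) :=
    (hrev _ _ (fun h => hne (htail (congrArg tail h))) hij).trans (hg i).1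
  exact (hg i).2 (htail hback ▸ hij)

theorem exists_cycle_injective_tail (hloop : ∀ a, tail a ≠ head a)
    (hrev : ∀ a b, a ≠ b → edge a = edge b → tail b = head a) {a : α}
    (h : Relation.TransGen (WalkAdj tail head edge) a a) :
    ∃ k, ∃ g : Fin (k + 1) → α, (∀ i, WalkAdj tail head edge (g i) (g (i + 1))) ∧
      Function.Injective (tail ∘ g) := by
  obtain ⟨n, f, ⟨hn, hf, hlast⟩, hmin⟩ := exists_minimal_closedWalk h
  have hinj : ∀ i j, i < j → j < n → tail (f j) ≠ tail (f i) := by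
    intro i j hij hjn
    have := tail_ne_of_minimal hloop hrev hmin (j - i) (by omega) (by omega) (fun k => f (k + i))
      (fun k hk => by simpa [Nat.add_right_comm] using hf (k + i) (by omega))
    simpa [Nat.sub_add_cancel hij.le] using this
  obtain ⟨k, rfl⟩ : ∃ k, n = k + 1 := ⟨n - 1, by omega⟩
  refine ⟨k, fun i => f i, fun i => ?_, fun i j hij => ?_⟩
  · simp only [Fin.val_add_one]
    split_ifs with hi
    · simpa [hi] using hlast
    · exact hf i (by have := Fin.val_lt_last hi; omega)
  · by_contra hne
    rcases lt_or_gt_of_ne (Fin.val_ne_of_ne hne) with hlt | hlt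
    · exact hinj _ _ hlt j.isLt hij.symm
    · exact hinj _ _ hlt i.isLt hij

theorem exists_simple_cycle (hloop : ∀ a, tail a ≠ head a)
    (hrev : ∀ a b, a ≠ b → edge a = edge b → tail b = head a) {a : α}
    (h : Relation.TransGen (WalkAdj tail head edge) a a) :
    ∃ k, ∃ g : Fin (k + 1) → α, (∀ i, WalkAdj tail head edge (g i) (g (i + 1))) ∧
      Function.Injective (tail ∘ g) ∧ Function.Injective (edge ∘ g) := by
  obtain ⟨k, g, hg, htail⟩ := exists_cycle_injective_tail hloop hrev h
  exact ⟨k, g, hg, htail, injective_edge_of_injective_tail hrev hg htail⟩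

end WalkAdj

end CyclicWalk

/-! ## Well-formed structures -/

namespace Formula

theorem dual_dual (A : Formula) : A.dual.dual = A := by
  induction A <;> simp [dual, *]

theorem Positive.hasBotB_eq_false {A : Formula} (h : A.Positive) : A.hasBotB = false := by
  induction h <;> simp [hasBotB, *]

theorem Negative.hasBotB_eq_true {A : Formula} (h : A.Negative) : A.hasBotB = true := by
  induction h <;> simp [hasBotB, *]

theorem Positive.not_negative {A : Formula} (h : A.Positive) : ¬ A.Negative := by
  cases h <;> nofun

theorem ne_of_eq_tens_or_parr {A B C : Formula} (h : A = tens B C ∨ A = parr B C) :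
    A ≠ B ∧ A ≠ C := by
  rcases h with rfl | rfl <;> constructor <;> intro h <;>
    have := congrArg sizeOf h <;> simp at this <;> omega

/-- The sort of the link that introduces the main connective of a formula; atoms are
introduced by axioms. -/
def principalSort : Formula → LinkSort
  | one => .one
  | bot => .bot
  | var _ => .ax
  | covar _ => .ax
  | tens _ _ => .tens
  | parr _ _ => .parr

theorem Positive.principalSort {A : Formula} (h : A.Positive) :
    A.principalSort = .one ∨ A.principalSort = .tens := by
  cases h <;> simp [Formula.principalSort]

end Formula

def LinkSort.dual : LinkSort → LinkSort
  | .one => .bot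
  | .bot => .one
  | .tens => .parr
  | .parr => .tens
  | s => s

theorem Formula.principalSort_dual (A : Formula) : A.dual.principalSort = A.principalSort.dual := by
  cases A <;> rfl

namespace Struct

variable {S : Struct}

@[simp] theorem mem_concls {e : S.Edge} {n : S.Node} : e ∈ S.concls n ↔ S.src e = n := by
  simp [concls]

@[simp] theorem mem_prems {e : S.Edge} {n : S.Node} : e ∈ S.prems n ↔ S.tgt e = some n := by
  simp [prems]

theorem eq_of_concls_eq_singleton {n : S.Node} {e g : S.Edge} (hn : S.concls n = {g})
    (he : S.src e = n) : e = g :=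
  Finset.mem_singleton.1 (hn ▸ mem_concls.2 he)

theorem ne_of_sort_ne {n m : S.Node} (h : S.sort n ≠ S.sort m) : n ≠ m :=
  fun hnm => h (hnm ▸ rfl)

theorem tgt_eq_iff_of_prems_eq {c : S.Node} {e f : S.Edge} (h : S.prems c = {e, f})
    {x : S.Edge} :
    S.tgt x = some c ↔ x = e ∨ x = f := by
  rw [← mem_prems, h]; simp

theorem src_eq_iff_of_concls_eq {a : S.Node} {e f : S.Edge} (h : S.concls a = {e, f})
    {x : S.Edge} :
    S.src x = a ↔ x = e ∨ x = f := by
  rw [← mem_concls, h]; simp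

theorem exists_index_bound (S : Struct) : ∃ N, ∀ e, S.pIdx e < N ∧ S.cIdx e < N :=
  ⟨(Finset.univ.sup fun e => max (S.pIdx e) (S.cIdx e)) + 1, fun e => by
    have := Finset.le_sup (f := fun e => max (S.pIdx e) (S.cIdx e)) (Finset.mem_univ e)
    omega⟩

namespace WF

variable (hWF : S.WF)
include hWF

theorem prems_eq_empty {n : S.Node} (hn : S.sort n = .ax ∨ S.sort n = .one ∨ S.sort n = .bot) :
    S.prems n = ∅ := by
  rcases hn with hn | hn | hn
  exacts [(hWF.1 n hn).1, (hWF.2.2.2.2.1 n hn).1, (hWF.2.2.2.2.2.1 n hn).1]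

theorem tgt_ne_of_sort {e : S.Edge} {n : S.Node}
    (hn : S.sort n = .ax ∨ S.sort n = .one ∨ S.sort n = .bot) : S.tgt e ≠ some n :=
  fun h => by simpa [hWF.prems_eq_empty hn] using mem_prems.2 h

theorem sort_src_ne_cut (e : S.Edge) : S.sort (S.src e) ≠ .cut := fun hc => by
  simpa [(hWF.2.1 _ hc).1] using (mem_concls (S := S)).2 (rfl : S.src e = S.src e)

theorem exists_concls_ax {a : S.Node} (ha : S.sort a = .ax) {v : S.Edge} (hv : S.src v = a) :
    ∃ u, v ≠ u ∧ S.concls a = {v, u} := by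
  obtain ⟨-, e, f, hef, hconc, -⟩ := hWF.1 a ha
  have hv' : v ∈ S.concls a := mem_concls.2 hv
  rw [hconc, Finset.mem_insert, Finset.mem_singleton] at hv'
  rcases hv' with rfl | rfl
  exacts [⟨f, hef, hconc⟩, ⟨e, hef.symm, by rw [hconc, Finset.pair_comm]⟩]

theorem exists_prems_cut {c : S.Node} (hc : S.sort c = .cut) {e : S.Edge}
    (he : S.tgt e = some c) :
    ∃ h, e ≠ h ∧ S.prems c = {e, h} ∧ S.typ h = (S.typ e).dual := by
  obtain ⟨-, e', f, hef, hprem, hdual⟩ := hWF.2.1 c hc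
  have he' : e ∈ S.prems c := mem_prems.2 he
  rw [hprem, Finset.mem_insert, Finset.mem_singleton] at he'
  rcases he' with rfl | rfl
  · exact ⟨f, hef, hprem, hdual⟩
  · exact ⟨e', hef.symm, by rw [hprem, Finset.pair_comm], by rw [hdual, Formula.dual_dual]⟩

theorem tens_spec {n : S.Node} (hn : S.sort n = .tens) :
    ∃ e f g, e ≠ f ∧ S.prems n = {e, f} ∧ S.pIdx e = 0 ∧ S.pIdx f = 1 ∧ S.concls n = {g} ∧
      S.typ g = .tens (S.typ e) (S.typ f) :=
  hWF.2.2.1 n hn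

theorem parr_spec {n : S.Node} (hn : S.sort n = .parr) :
    ∃ e f g, e ≠ f ∧ S.prems n = {e, f} ∧ S.pIdx e = 0 ∧ S.pIdx f = 1 ∧ S.concls n = {g} ∧
      S.typ g = .parr (S.typ e) (S.typ f) :=
  hWF.2.2.2.1 n hn

theorem binary_spec {n : S.Node} (hn : S.sort n = .tens ∨ S.sort n = .parr) :
    ∃ e f g, e ≠ f ∧ S.prems n = {e, f} ∧ S.pIdx e = 0 ∧ S.pIdx f = 1 ∧
      S.concls n = {g} ∧
      (S.typ g = .tens (S.typ e) (S.typ f) ∨ S.typ g = .parr (S.typ e) (S.typ f)) := by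
  rcases hn with hn | hn
  · obtain ⟨e, f, g, hef, hprem, hpe, hpf, hconc, hg⟩ := hWF.tens_spec hn
    exact ⟨e, f, g, hef, hprem, hpe, hpf, hconc, Or.inl hg⟩
  · obtain ⟨e, f, g, hef, hprem, hpe, hpf, hconc, hg⟩ := hWF.parr_spec hn
    exact ⟨e, f, g, hef, hprem, hpe, hpf, hconc, Or.inr hg⟩

theorem concls_one {n : S.Node} (hn : S.sort n = .one) {e : S.Edge} (he : S.src e = n) :
    S.concls n = {e} ∧ S.typ e = .one := by
  obtain ⟨-, f, hf, hft⟩ := hWF.2.2.2.2.1 n hn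
  obtain rfl := eq_of_concls_eq_singleton hf he
  exact ⟨hf, hft⟩

theorem concls_bot {n : S.Node} (hn : S.sort n = .bot) {e : S.Edge} (he : S.src e = n) :
    S.concls n = {e} ∧ S.typ e = .bot := by
  obtain ⟨-, f, hf, hft⟩ := hWF.2.2.2.2.2.1 n hn
  obtain rfl := eq_of_concls_eq_singleton hf he
  exact ⟨hf, hft⟩

theorem exists_concl_bot {n : S.Node} (hn : S.sort n = .bot) :
    ∃ e, S.src e = n ∧ S.typ e = .bot := by
  obtain ⟨-, f, hf, hft⟩ := hWF.2.2.2.2.2.1 n hn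
  exact ⟨f, mem_concls.1 (by simp [hf]), hft⟩

theorem cut_spec {c : S.Node} (hc : S.sort c = .cut) :
    ∃ e f, e ≠ f ∧ S.prems c = {e, f} ∧ S.typ f = (S.typ e).dual :=
  (hWF.2.1 c hc).2

theorem prems_eq_of_cut {c : S.Node} (hc : S.sort c = .cut) {e f : S.Edge}
    (he : S.tgt e = some c) (hf : S.tgt f = some c) (hef : e ≠ f) : S.prems c = {e, f} := by
  obtain ⟨h, -, hprem, -⟩ := hWF.exists_prems_cut hc he
  obtain rfl : f = h := ((tgt_eq_iff_of_prems_eq hprem).1 hf).resolve_left hef.symm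
  exact hprem

theorem principalSort_typ {e : S.Edge} (hax : S.sort (S.src e) ≠ .ax)
    (hsync : S.sort (S.src e) ≠ .sync) : (S.typ e).principalSort = S.sort (S.src e) := by
  cases hs : S.sort (S.src e)
  · exact absurd hs hax
  · exact absurd hs (hWF.sort_src_ne_cut e)
  · obtain ⟨_, _, g, -, -, -, -, hg, hgt⟩ := hWF.tens_spec hs
    rw [eq_of_concls_eq_singleton hg rfl, hgt]; rfl
  · obtain ⟨_, _, g, -, -, -, -, hg, hgt⟩ := hWF.parr_spec hs
    rw [eq_of_concls_eq_singleton hg rfl, hgt]; rfl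
  · rw [(hWF.concls_one hs rfl).2]; rfl
  · rw [(hWF.concls_bot hs rfl).2]; rfl
  · exact absurd hs hsync

theorem sync_prem_concl {l : S.Node} (hl : S.sort l = .sync) {e : S.Edge}
    (he : S.tgt e = some l) : ∃ f, S.src f = l ∧ S.cIdx f = S.pIdx e ∧ S.typ f = S.typ e ∧
      ∀ f', S.src f' = l → S.cIdx f' = S.pIdx e → f' = f := by
  obtain ⟨-, hpc, -, htyp⟩ := hWF.2.2.2.2.2.2.1 l hl
  obtain ⟨f, ⟨hf, hfe⟩, huniq⟩ := hpc e (mem_prems.2 he)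
  exact ⟨f, mem_concls.1 hf, hfe, htyp e (mem_prems.2 he) f hf hfe,
    fun f' h1 h2 => huniq f' ⟨mem_concls.2 h1, h2⟩⟩

theorem sync_concl_prem {l : S.Node} (hl : S.sort l = .sync) {f : S.Edge} (hf : S.src f = l) :
    ∃ e, S.tgt e = some l ∧ S.pIdx e = S.cIdx f ∧ S.typ f = S.typ e := by
  obtain ⟨-, -, hcp, htyp⟩ := hWF.2.2.2.2.2.2.1 l hl
  obtain ⟨e, ⟨he, hef⟩, -⟩ := hcp f (mem_concls.2 hf)
  exact ⟨e, mem_prems.1 he, hef, htyp e he f (mem_concls.2 hf) hef.symm⟩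

theorem polarized_of_tgt_sync {l : S.Node} (hl : S.sort l = .sync) {e : S.Edge}
    (he : S.tgt e = some l) : (S.typ e).Polarized :=
  (hWF.2.2.2.2.2.2.1 l hl).1 e (mem_prems.2 he)

theorem polarized_of_src_sync {l : S.Node} (hl : S.sort l = .sync) {f : S.Edge}
    (hf : S.src f = l) : (S.typ f).Polarized := by
  obtain ⟨e, he, -, htyp⟩ := hWF.sync_concl_prem hl hf
  exact htyp ▸ hWF.polarized_of_tgt_sync hl he

theorem exists_concl_hasBotB {n : S.Node}
    (hn : (S.sort n = .tens ∨ S.sort n = .parr) ∨ S.sort n = .sync) {e : S.Edge}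
    (hen : S.tgt e = some n) (hbot : (S.typ e).hasBotB = true) :
    ∃ g, S.src g = n ∧ (S.typ g).hasBotB = true := by
  rcases hn with hn | hn
  · obtain ⟨x, y, g, -, hprem, -, -, hconc, hgt⟩ := hWF.binary_spec hn
    refine ⟨g, mem_concls.1 (by simp [hconc]), ?_⟩
    rcases (tgt_eq_iff_of_prems_eq hprem).1 hen with rfl | rfl <;>
      rcases hgt with h | h <;> simp [h, Formula.hasBotB, hbot]
  · obtain ⟨f, hfn, -, hft, -⟩ := hWF.sync_prem_concl hn hen
    exact ⟨f, hfn, hft ▸ hbot⟩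

theorem sort_eq_bot_of_mem_boxes {n b : S.Node} (hb : b ∈ S.boxes n) : S.sort b = .bot :=
  hWF.2.2.2.2.2.2.2.1 n b hb

theorem boxes_eq_empty {n : S.Node} (hn : S.box n = none) : S.boxes n = ∅ :=
  hWF.2.2.2.2.2.2.2.2.1 n hn

theorem boxes_eq_insert {n b : S.Node} (hb : S.box n = some b) :
    b ∉ S.boxes b ∧ S.boxes n = insert b (S.boxes b) :=
  hWF.2.2.2.2.2.2.2.2.2.1 n b hb

theorem mem_boxes_of_box_eq {n b : S.Node} (hb : S.box n = some b) : b ∈ S.boxes n := by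
  simp [(hWF.boxes_eq_insert hb).2]

theorem sort_eq_bot_of_box_eq {n b : S.Node} (hb : S.box n = some b) : S.sort b = .bot :=
  hWF.sort_eq_bot_of_mem_boxes (hWF.mem_boxes_of_box_eq hb)

theorem box_tgt_eq_none {e : S.Edge} {n : S.Node} (he : S.box (S.src e) = none)
    (hn : S.tgt e = some n) : S.box n = none := by
  by_contra h
  obtain ⟨b, hb⟩ := Option.ne_none_iff_exists'.1 h
  simpa [hWF.boxes_eq_empty he] using
    hWF.2.2.2.2.2.2.2.2.2.2 e n hn (hWF.mem_boxes_of_box_eq hb)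

theorem exists_mem_boxes_box_eq_none {n : S.Node} (hn : S.box n ≠ none) :
    ∃ b ∈ S.boxes n, S.box b = none := by
  induction hcard : (S.boxes n).card using Nat.strong_induction_on generalizing n with
  | _ k ih =>
    obtain ⟨b, hb⟩ := Option.ne_none_iff_exists'.1 hn
    obtain ⟨hbb, hins⟩ := hWF.boxes_eq_insert hb
    by_cases hb0 : S.box b = none
    · exact ⟨b, hWF.mem_boxes_of_box_eq hb, hb0⟩
    · obtain ⟨c, hc, hc0⟩ :=
        ih _ (by rw [← hcard, hins, Finset.card_insert_of_notMem hbb]; omega) hb0 rfl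
      exact ⟨c, by rw [hins]; exact Finset.mem_insert_of_mem hc, hc0⟩

end WF

end Struct

/-! ## Reduction steps -/

theorem pInjOnto_some (α : Type*) : PInjOnto (some : α → Option α) Set.univ :=
  ⟨fun _ _ _ h h' => Option.some.inj (h.trans h'.symm), fun _ _ _ => trivial,
    fun a _ => ⟨a, rfl⟩⟩

theorem pInjOnto_subtype_val {α : Type*} (p : α → Prop) :
    PInjOnto (fun x : Subtype p => some x.val) {a | p a} :=
  ⟨fun _ _ _ h h' => Subtype.ext (Option.some.inj (h.trans h'.symm)),
    fun x _ h => Option.some.inj h ▸ x.2, fun a ha => ⟨⟨a, ha⟩, rfl⟩⟩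

theorem pInjOnto_sum_elim {α : Type*} (p : α → Prop) (β : Type*) :
    PInjOnto (Sum.elim (fun x : Subtype p => some x.val) fun _ : β => none) {a | p a} := by
  refine ⟨?_, ?_, fun a ha => ⟨.inl ⟨a, ha⟩, rfl⟩⟩
  · rintro (x | _) (x' | _) b h h' <;> simp at h h'
    exact congrArg Sum.inl (Subtype.ext (h.trans h'.symm))
  · rintro (x | _) b h <;> simp at h
    exact h ▸ x.2

theorem pInjOnto_subtype_val_of_ne {α : Type*} [DecidableEq α] (p : α → Prop) (t : α) :
    PInjOnto (fun x : Subtype p => if x.val = t then none else some x.val)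
      {a | a ≠ t ∧ p a} := by
  refine ⟨fun x x' b h h' => ?_, fun x b h => ?_,
    fun a ha => ⟨⟨a, ha.2⟩, by simp [ha.1]⟩⟩
  · simp only at h h'
    split_ifs at h h'
    exact Subtype.ext (Option.some.inj (h.trans h'.symm))
  · simp only at h
    split_ifs at h with hx
    exact Option.some.inj h ▸ ⟨hx, x.2⟩

theorem attachWith_bind_of_ne {α : Type*} [DecidableEq α] {P : α → Prop} {o : Option α}
    (H : ∀ a, o = some a → P a) {t : α} (ht : o ≠ some t) :
    (o.attachWith P H).bind (fun x => if x.val = t then none else some x.val) = o := by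
  cases o <;> simp_all

namespace Struct

def Reducible (R : Struct) : Prop := ∃ Q, Step R Q

variable {R : Struct}

def withEdges (R : Struct) (E : Type) [Fintype E] [DecidableEq E] (typ : E → Formula)
    (src : E → R.Node) (tgt : E → Option R.Node) (pIdx cIdx : E → ℕ) : Struct where
  Edge := E
  Node := R.Node
  edgeFintype := inferInstance
  nodeFintype := inferInstance
  edgeDecEq := inferInstance
  nodeDecEq := inferInstance
  typ := typ
  sort := R.sort
  src := src
  tgt := tgt
  pIdx := pIdx
  cIdx := cIdx
  box := R.box
  boxes := R.boxes

theorem agreesOn_withEdges {E : Type} [Fintype E] [DecidableEq E] {typ : E → Formula}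
    {src : E → R.Node} {tgt : E → Option R.Node} {pIdx cIdx : E → ℕ}
    {jE : E → Option R.Edge} {XE : Set R.Edge} {XN : Set R.Node}
    (h : ∀ x y, jE x = some y → y ∉ XE → typ x = R.typ y ∧ src x = R.src y ∧
      tgt x = R.tgt y ∧ pIdx x = R.pIdx y ∧ cIdx x = R.cIdx y) :
    AgreesOn (R.withEdges E typ src tgt pIdx cIdx) R some jE XE XN := by
  refine ⟨fun x y hxy hy => ?_, ?_⟩
  · obtain ⟨h1, h2, h3, h4, h5⟩ := h x y hxy hy
    simp [withEdges, h1, h2, h3, h4, h5]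
  · rintro n _ ⟨⟩ -
    exact ⟨rfl, by simp [withEdges], by rintro b _ ⟨⟩; rfl⟩

open Classical in
noncomputable abbrev restrict (R : Struct) (P : R.Node → Prop) (E : R.Edge → Prop)
    (sort : R.Node → LinkSort) (tgt : R.Edge → Option R.Node) (pIdx : R.Edge → ℕ)
    (box : R.Node → Option R.Node) (hsrc : ∀ x, E x → P (R.src x))
    (htgt : ∀ x, E x → ∀ n, tgt x = some n → P n)
    (hbox : ∀ n, P n → ∀ b, box n = some b → P b) : Struct where
  Edge := {x // E x}
  Node := {n // P n}
  edgeFintype := inferInstance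
  nodeFintype := inferInstance
  edgeDecEq := inferInstance
  nodeDecEq := inferInstance
  typ x := R.typ x
  sort n := sort n
  src x := ⟨R.src x, hsrc x x.2⟩
  tgt x := (tgt x).attachWith P fun n hn => htgt x x.2 n hn
  pIdx x := pIdx x
  cIdx x := R.cIdx x
  box n := (box n).attachWith P fun b hb => hbox n n.2 b hb
  boxes n := (R.boxes n).subtype P

section Restrict

variable {P : R.Node → Prop} {E : R.Edge → Prop} {sort : R.Node → LinkSort}
  {tgt : R.Edge → Option R.Node} {pIdx : R.Edge → ℕ} {hsrc : ∀ x, E x → P (R.src x)}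
  {htgt : ∀ x, E x → ∀ n, tgt x = some n → P n}
  {hbox : ∀ n, P n → ∀ b, R.box n = some b → P b}

theorem agreesOn_restrict {XE : Set R.Edge} {XN : Set R.Node}
    (h : ∀ x : {x // E x}, x.val ∉ XE → tgt x = R.tgt x ∧ pIdx x = R.pIdx x) :
    AgreesOn (R.restrict P E R.sort tgt pIdx R.box hsrc htgt hbox) R (fun n => some n.val)
      (fun x => some x.val) XE XN := by
  refine ⟨?_, ?_⟩
  · rintro x _ ⟨⟩ hx
    exact ⟨rfl, rfl, by simp [(h x hx).1], (h x hx).2, rfl⟩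
  · rintro n _ ⟨⟩ -
    refine ⟨rfl, by simp, ?_⟩
    rintro b _ ⟨⟩
    simp

theorem agreesOn_restrict_erase {t : R.Node} {XE : Set R.Edge} {XN : Set R.Node}
    (hsort : ∀ n : {n // P n}, n.val ≠ t → sort n = R.sort n)
    (hboxt : ∀ n, R.box n ≠ some t)
    (h : ∀ x : {x // E x}, x.val ∉ XE →
      R.src x ≠ t ∧ tgt x = R.tgt x ∧ R.tgt x ≠ some t ∧ pIdx x = R.pIdx x) :
    AgreesOn (R.restrict P E sort tgt pIdx R.box hsrc htgt hbox) R
      (fun n => if n.val = t then none else some n.val) (fun x => some x.val) XE XN := by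
  refine ⟨?_, ?_⟩
  · rintro x _ ⟨⟩ hx
    obtain ⟨hsrct, htgt_eq, htgtt, hpIdx⟩ := h x hx
    refine ⟨rfl, by simp [hsrct], ?_, hpIdx, rfl⟩
    rw [← htgt_eq]
    exact attachWith_bind_of_ne _ (htgt_eq ▸ htgtt)
  · rintro n _ hn -
    simp only at hn
    split_ifs at hn with hnt
    cases hn
    refine ⟨hsort n hnt, attachWith_bind_of_ne _ (hboxt n), ?_⟩
    rintro b _ hb
    simp only at hb
    split_ifs at hb
    cases hb
    simp

end Restrict

theorem Correct.not_parallel (hC : R.Correct) {x y : R.Edge} {a c : R.Node} (hxy : x ≠ y)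
    (hac : a ≠ c) (hxa : R.src x = a) (hya : R.src y = a) (hxc : R.tgt x = some c)
    (hyc : R.tgt y = some c) (hba : R.box a = none) (hbc : R.box c = none)
    (ha : R.sort a ≠ .sync) (hc : R.sort c ≠ .sync) (hcp : R.sort c ≠ .parr) : False := by
  have hrep : ∀ n, R.box n = none → R.RepAt none n n := fun n hn => Or.inl ⟨hn, rfl⟩
  refine hC none ⟨1, ![a, c], ![x, y], ?_, ?_, ?_, ?_, ?_⟩
  · intro i j h; fin_cases i <;> fin_cases j <;> simp_all [eq_comm]
  · intro i j h; fin_cases i <;> fin_cases j <;> simp_all [eq_comm]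
  · intro i; fin_cases i
    · exact ⟨c, hxc, Or.inl hbc, Or.inl ⟨hxa ▸ hrep a hba, hrep c hbc⟩⟩
    · exact ⟨c, hyc, Or.inl hbc, Or.inr ⟨hya ▸ hrep a hba, hrep c hbc⟩⟩
  · intro p hp i hi; fin_cases i <;> simp_all
  · intro l hl i hi
    fin_cases i <;> simp_all [OutEdgeOf] <;> rcases hi with ⟨rfl, -⟩ | ⟨rfl, -⟩ <;> simp_all

theorem reducible_of_axCut (hWF : R.WF) (hC : R.Correct) {a c : R.Node} {v : R.Edge}
    (ha : R.sort a = .ax) (hc : R.sort c = .cut) (hba : R.box a = none) (hbc : R.box c = none)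
    (hva : R.src v = a) (hvc : R.tgt v = some c) : R.Reducible := by
  obtain ⟨u, hvu, hconc⟩ := hWF.exists_concls_ax ha hva
  obtain ⟨q, hvq, hprem, -⟩ := hWF.exists_prems_cut hc hvc
  have hua : R.src u = a := (src_eq_iff_of_concls_eq hconc).2 (Or.inr rfl)
  have hac : a ≠ c := ne_of_sort_ne (by rw [ha, hc]; decide)
  have huq : u ≠ q := by
    rintro rfl
    exact hC.not_parallel hvu hac hva hua hvc ((tgt_eq_iff_of_prems_eq hprem).2 (Or.inr rfl))
      hba hbc (by rw [ha]; decide) (by rw [hc]; decide) (by rw [hc]; decide)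
  have hprem_a : ∀ x, R.tgt x ≠ some a := fun x => hWF.tgt_ne_of_sort (Or.inl ha)
  refine ⟨R.restrict (fun n => n ≠ a ∧ n ≠ c) (fun x => x ≠ v ∧ x ≠ u) R.sort
    (fun x => if R.tgt x = some c then R.tgt u else R.tgt x)
    (fun x => if R.tgt x = some c then R.pIdx u else R.pIdx x) R.box ?_ ?_ ?_,
    Or.inl ⟨a, c, v, u, q, ha, hc, hba, hbc, hvu, hvq, huq, hconc, hprem, _, _,
      fun _ => Option.some_ne_none _, fun _ => Option.some_ne_none _, pInjOnto_subtype_val _,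
      pInjOnto_subtype_val _, agreesOn_restrict ?_, ?_⟩⟩
  · rintro x ⟨hxv, hxu⟩
    exact ⟨fun h => by simp_all [src_eq_iff_of_concls_eq hconc],
      fun h => hWF.sort_src_ne_cut x (h ▸ hc)⟩
  · intro x _ n hn
    split_ifs at hn with hxc
    · exact ⟨fun h => hprem_a u (h ▸ hn), fun h =>
        huq (((tgt_eq_iff_of_prems_eq hprem).1 (h ▸ hn)).resolve_left hvu.symm)⟩
    · exact ⟨fun h => hprem_a x (h ▸ hn), fun h => hxc (h ▸ hn)⟩
  · intro n _ b hb
    have := hWF.sort_eq_bot_of_box_eq hb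
    exact ⟨ne_of_sort_ne (by rw [this, ha]; decide), ne_of_sort_ne (by rw [this, hc]; decide)⟩
  · rintro ⟨x, hxv, _⟩ hxq
    have : R.tgt x ≠ some c := fun h => ((tgt_eq_iff_of_prems_eq hprem).1 h).elim hxv hxq
    simp [this]
  · rintro ⟨x, hxv, hxu⟩ ⟨⟩
    simp [(tgt_eq_iff_of_prems_eq hprem).2 (Or.inr rfl)]

theorem reducible_of_oneBot (hWF : R.WF) {c n₁ b : R.Node} {o k : R.Edge}
    (hc : R.sort c = .cut) (hn₁ : R.sort n₁ = .one) (hb : R.sort b = .bot)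
    (hbc : R.box c = none) (hbn₁ : R.box n₁ = none) (hbb : R.box b = none)
    (hon₁ : R.src o = n₁) (hkb : R.src k = b) (hoc : R.tgt o = some c)
    (hkc : R.tgt k = some c) : R.Reducible := by
  have hok : o ≠ k := fun h => by simp_all
  have hprem := hWF.prems_eq_of_cut hc hoc hkc hok
  have hconc₁ := (hWF.concls_one hn₁ hon₁).1
  have hconcb := (hWF.concls_bot hb hkb).1
  refine ⟨R.restrict (fun n => n ≠ c ∧ n ≠ n₁ ∧ n ≠ b) (fun x => x ≠ o ∧ x ≠ k) R.sort
    R.tgt R.pIdx (fun n => if R.box n = some b then none else R.box n) ?_ ?_ ?_,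
    Or.inr (Or.inr (Or.inr ⟨c, n₁, b, o, k, hc, hn₁, hb, hbc, hbn₁, hbb, hok, hprem, hon₁,
      hkb, _, _, fun _ => Option.some_ne_none _, fun _ => Option.some_ne_none _,
      pInjOnto_subtype_val _, pInjOnto_subtype_val _, ?_, ?_⟩))⟩
  · rintro x ⟨hxo, hxk⟩
    exact ⟨fun h => hWF.sort_src_ne_cut x (h ▸ hc),
      fun h => hxo (eq_of_concls_eq_singleton hconc₁ h),
      fun h => hxk (eq_of_concls_eq_singleton hconcb h)⟩
  · rintro x ⟨hxo, hxk⟩ n hn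
    exact ⟨fun h => ((tgt_eq_iff_of_prems_eq hprem).1 (h ▸ hn)).elim hxo hxk,
      fun h => hWF.tgt_ne_of_sort (Or.inr (Or.inl hn₁)) (h ▸ hn),
      fun h => hWF.tgt_ne_of_sort (Or.inr (Or.inr hb)) (h ▸ hn)⟩
  · intro n _ b' hb'
    split_ifs at hb' with h
    have := hWF.sort_eq_bot_of_box_eq hb'
    exact ⟨ne_of_sort_ne (by rw [this, hc]; decide), ne_of_sort_ne (by rw [this, hn₁]; decide),
      fun h' => h (h' ▸ hb')⟩
  · rintro x _ ⟨⟩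
    simp
  · rintro n _ ⟨⟩
    refine ⟨rfl, ?_, fun h => by simp [h], fun h => by simp [h]⟩
    rintro b₀ _ ⟨⟩
    simp [b₀.2.2.2]

theorem reducible_of_syncCut (hWF : R.WF) {l c : R.Node} {d' : R.Edge}
    (hl : R.sort l = .sync) (hc : R.sort c = .cut) (hbl : R.box l = none) (hbc : R.box c = none)
    (hneg : (R.typ d').Negative) (hd'l : R.src d' = l) (hd'c : R.tgt d' = some c) :
    R.Reducible := by
  obtain ⟨d, hdl, hpd, -⟩ := hWF.sync_concl_prem hl hd'l
  obtain ⟨q, hd'q, hprem, -⟩ := hWF.exists_prems_cut hc hd'c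
  have hlc : l ≠ c := ne_of_sort_ne (by rw [hl, hc]; decide)
  have hqc : R.tgt q = some c := (tgt_eq_iff_of_prems_eq hprem).2 (Or.inr rfl)
  have hdq : d ≠ q := fun h => hlc (Option.some.inj (hdl.symm.trans (h ▸ hqc)))
  have hdd' : d ≠ d' := fun h => hlc (Option.some.inj (hdl.symm.trans (h ▸ hd'c)))
  obtain ⟨j, hj⟩ := R.exists_index_bound
  refine ⟨R.withEdges ({e // e ≠ d'} ⊕ Unit) (Sum.elim (fun e => R.typ e) fun _ => R.typ q)
      (Sum.elim (fun e => R.src e) fun _ => l)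
      (Sum.elim (fun e => if e.1 = d then some c else if e.1 = q then some l else R.tgt e)
        fun _ => some c)
      (Sum.elim (fun e => if e.1 = d then R.pIdx d' else if e.1 = q then j else R.pIdx e)
        fun _ => R.pIdx q)
      (Sum.elim (fun e => R.cIdx e) fun _ => j),
    Or.inr (Or.inr (Or.inl (Or.inr (Or.inr (Or.inl ⟨l, c, d, d', q, j, hl, hc, hbl, hbc, hneg,
      hd'l, hd'c, hdl, hpd, hd'q, hdq, hdd', hprem, fun e _ => (hj e).1.ne, fun e _ => (hj e).2.ne,
      some, Sum.elim (fun e => some e.1) fun _ => none, l, c, .inr (),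
      fun _ => Option.some_ne_none _,
      pInjOnto_some _, pInjOnto_sum_elim _ _, rfl, rfl, rfl, ?_, agreesOn_withEdges ?_, ?_, ?_,
      ⟨rfl, rfl, rfl, rfl, rfl⟩⟩)))))⟩
  · rintro (_ | ⟨⟩) h
    · simp at h
    · rfl
  · rintro (⟨x, hx⟩ | _) y ⟨⟩ hy
    simp only [Set.mem_insert_iff, Set.mem_singleton_iff, not_or] at hy
    simp [hy.1, hy.2]
  · rintro (⟨x, hx⟩ | _) ⟨⟩
    simp [withEdges]
  · rintro (⟨x, hx⟩ | _) ⟨⟩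
    simp [withEdges, hdq.symm]

theorem reducible_of_syncAx (hWF : R.WF) {l a : R.Node} {u : R.Edge}
    (hl : R.sort l = .sync) (ha : R.sort a = .ax) (hbl : R.box l = none) (hba : R.box a = none)
    (hpos : (R.typ u).Positive) (hua : R.src u = a) (hul : R.tgt u = some l) :
    R.Reducible := by
  obtain ⟨v, huv, hconc⟩ := hWF.exists_concls_ax ha hua
  have hva : R.src v = a := (src_eq_iff_of_concls_eq hconc).2 (Or.inr rfl)
  obtain ⟨u', hu'l, hcu', -, -⟩ := hWF.sync_prem_concl hl hul
  have hla : l ≠ a := ne_of_sort_ne (by rw [hl, ha]; decide)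
  have hu'u : u' ≠ u := fun h => hla (by rw [← hu'l, h, hua])
  have hu'v : u' ≠ v := fun h => hla (by rw [← hu'l, h, hva])
  obtain ⟨j, hj⟩ := R.exists_index_bound
  refine ⟨R.withEdges ({e // e ≠ u} ⊕ Unit) (Sum.elim (fun e => R.typ e) fun _ => R.typ v)
      (Sum.elim (fun e => if e.1 = u' then a else R.src e) fun _ => l)
      (Sum.elim (fun e => if e.1 = v then some l else R.tgt e) fun _ => R.tgt v)
      (Sum.elim (fun e => if e.1 = v then j else R.pIdx e) fun _ => R.pIdx v)
      (Sum.elim (fun e => if e.1 = u' then R.cIdx u else R.cIdx e) fun _ => j),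
    Or.inr (Or.inr (Or.inl (Or.inr (Or.inl ⟨l, a, u, u', v, j, hl, ha, hbl, hba, hpos, huv, hconc,
      hul, hu'l, hcu', hu'u, hu'v, fun e _ => (hj e).1.ne, fun e _ => (hj e).2.ne,
      some, Sum.elim (fun e => some e.1) fun _ => none, l, a, .inr (),
      fun _ => Option.some_ne_none _,
      pInjOnto_some _, pInjOnto_sum_elim _ _, rfl, rfl, rfl, ?_, agreesOn_withEdges ?_, ?_, ?_,
      ⟨rfl, rfl, rfl, by simp [withEdges], rfl⟩⟩))))⟩
  · rintro (_ | ⟨⟩) h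
    · simp at h
    · rfl
  · rintro (⟨x, hx⟩ | _) y ⟨⟩ hy
    simp only [Set.mem_insert_iff, Set.mem_singleton_iff, not_or] at hy
    simp [hy.1, hy.2]
  · rintro (⟨x, hx⟩ | _) ⟨⟩
    simp [withEdges, hu'v]
  · rintro (⟨x, hx⟩ | _) ⟨⟩
    simp [withEdges, hu'v.symm, hva]

theorem reducible_of_syncMult (hWF : R.WF) {l m : R.Node} {z : R.Edge}
    (hl : R.sort l = .sync) (hm : R.sort m = .tens ∨ R.sort m = .parr)
    (hbl : R.box l = none) (hbm : R.box m = none) (hzm : R.src z = m) (hzl : R.tgt z = some l) :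
    R.Reducible := by
  have hlm : l ≠ m := ne_of_sort_ne (by rcases hm with hm | hm <;> rw [hl, hm] <;> decide)
  obtain ⟨w, hwl, hcw, htw, -⟩ := hWF.sync_prem_concl hl hzl
  obtain ⟨x, y, g, hxy, hprem, hpx, hpy, hconc, htz⟩ := hWF.binary_spec hm
  obtain rfl := eq_of_concls_eq_singleton hconc hzm
  have hwx : w ≠ x := fun h => (Formula.ne_of_eq_tens_or_parr (htw ▸ htz)).1 (h ▸ rfl)
  have hwy : w ≠ y := fun h => (Formula.ne_of_eq_tens_or_parr (htw ▸ htz)).2 (h ▸ rfl)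
  obtain ⟨i, hi⟩ := R.exists_index_bound
  refine ⟨R.withEdges ({e // e ≠ z} ⊕ Bool)
      (Sum.elim (fun e => R.typ e) fun b => if b then R.typ x else R.typ y)
      (Sum.elim (fun e => if e.1 = w then m else R.src e) fun _ => l)
      (Sum.elim (fun e => if e.1 = x ∨ e.1 = y then some l else R.tgt e) fun _ => some m)
      (Sum.elim (fun e => if e.1 = x then i else if e.1 = y then i + 1 else R.pIdx e)
        fun b => if b then 0 else 1)
      (Sum.elim (fun e => R.cIdx e) fun b => if b then i else i + 1),
    Or.inr (Or.inr (Or.inl (Or.inl ⟨l, m, z, w, x, y, i, i + 1, hl, hm, hbl, hbm, hzm, hzl, hwl,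
      hcw, hxy, hprem, hpx, hpy, by omega, fun e _ => ⟨(hi e).1.ne, by have := hi e; omega⟩,
      fun e _ => ⟨(hi e).2.ne, by have := hi e; omega⟩, some,
      Sum.elim (fun e => some e.1) fun _ => none, l, m, .inr true, .inr false,
      fun _ => Option.some_ne_none _, pInjOnto_some _, pInjOnto_sum_elim _ _, rfl, rfl, nofun,
      rfl, rfl, ?_, agreesOn_withEdges ?_, ?_, ?_, ?_, ⟨rfl, rfl, rfl, rfl, rfl⟩,
      ⟨rfl, rfl, rfl, rfl, rfl⟩⟩)))⟩
  · rintro (_ | (_ | _)) h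
    · simp at h
    · exact Or.inr rfl
    · exact Or.inl rfl
  · rintro (⟨e, he⟩ | _) e' ⟨⟩ he'
    simp only [Set.mem_insert_iff, Set.mem_singleton_iff, not_or] at he'
    simp [he'.1, he'.2.1, he'.2.2]
  · rintro (⟨e, he⟩ | _) ⟨⟩
    simp [withEdges, hwx.symm]
  · rintro (⟨e, he⟩ | _) ⟨⟩
    simp [withEdges, hwy.symm, hxy.symm]
  · rintro (⟨e, he⟩ | _) ⟨⟩
    simp [withEdges, hwx, hwy]

theorem reducible_of_syncElim (hWF : R.WF) {l : R.Node} (hl : R.sort l = .sync)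
    (hbl : R.box l = none) (hones : ∀ e ∈ R.prems l, R.sort (R.src e) = .one) :
    R.Reducible := by
  choose mate hmate using fun e (he : R.tgt e = some l) => hWF.sync_prem_concl hl he
  refine ⟨R.restrict (fun n => n ≠ l) (fun x => R.src x ≠ l) R.sort
      (fun x => if h : R.tgt x = some l then R.tgt (mate x h) else R.tgt x)
      (fun x => if h : R.tgt x = some l then R.pIdx (mate x h) else R.pIdx x) R.box
      (fun _ hx => hx) ?_ ?_,
    Or.inr (Or.inr (Or.inl (Or.inr (Or.inr (Or.inr ⟨l, hl, hbl, hones, _, _,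
      fun _ => Option.some_ne_none _, fun _ => Option.some_ne_none _, pInjOnto_subtype_val _,
      pInjOnto_subtype_val _, agreesOn_restrict ?_, ?_⟩)))))⟩
  · rintro x - n hn rfl
    split_ifs at hn with h
    · have := hones _ (mem_prems.2 hn)
      rw [(hmate x h).1, hl] at this
      exact absurd this (by decide)
    · exact h hn
  · rintro n - b hb rfl
    exact absurd (hWF.sort_eq_bot_of_box_eq hb) (by rw [hl]; decide)
  · rintro x hx
    simp [show R.tgt x.val ≠ some l from hx]
  · rintro ⟨x, hx⟩ e f ⟨⟩ hel hfl hcf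
    obtain rfl := (hmate x hel).2.2.2 f hfl hcf
    simp [hel]

theorem reducible_of_tensParr (hWF : R.WF) {c t p : R.Node} {s s' : R.Edge}
    (hc : R.sort c = .cut) (ht : R.sort t = .tens) (hp : R.sort p = .parr)
    (hbc : R.box c = none) (hbt : R.box t = none) (hbp : R.box p = none)
    (hst : R.src s = t) (hs'p : R.src s' = p) (hsc : R.tgt s = some c) (hs'c : R.tgt s' = some c) :
    R.Reducible := by
  have htp : t ≠ p := ne_of_sort_ne (by rw [ht, hp]; decide)
  have htc : t ≠ c := ne_of_sort_ne (by rw [ht, hc]; decide)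
  have hss' : s ≠ s' := fun h => htp (by rw [← hst, h, hs'p])
  obtain ⟨a₁, a₂, g, ha, hpremt, hpa₁, hpa₂, hconct, -⟩ := hWF.binary_spec (Or.inl ht)
  obtain ⟨b₁, b₂, g', hb, hpremp, hpb₁, hpb₂, hconcp, -⟩ := hWF.binary_spec (Or.inr hp)
  obtain rfl := eq_of_concls_eq_singleton hconct hst
  obtain rfl := eq_of_concls_eq_singleton hconcp hs'p
  have hsrc_t : ∀ x, x ≠ s → R.src x ≠ t :=
    fun x hx h => hx (eq_of_concls_eq_singleton hconct h)
  have hta := fun {x} => tgt_eq_iff_of_prems_eq (S := R) hpremt (x := x)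
  have htb := fun {x} => tgt_eq_iff_of_prems_eq (S := R) hpremp (x := x)
  have hab : a₂ ≠ b₁ ∧ b₂ ≠ a₁ := by
    constructor <;> rintro rfl
    exacts [htp (Option.some.inj ((hta.2 (Or.inr rfl)).symm.trans (htb.2 (Or.inl rfl)))),
      htp (Option.some.inj ((hta.2 (Or.inl rfl)).symm.trans (htb.2 (Or.inr rfl))))]
  refine ⟨R.restrict (· ≠ p) (fun x => x ≠ s ∧ x ≠ s')
      (fun n => if n = t then .cut else R.sort n)
      (fun x => if x = a₁ ∨ x = b₁ then some c
        else if x = a₂ ∨ x = b₂ then some t else R.tgt x)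
      R.pIdx R.box ?_ ?_ ?_,
    Or.inr (Or.inl ⟨c, t, p, s, s', a₁, a₂, b₁, b₂, hc, ht, hp, hbc, hbt, hbp, hss',
      hWF.prems_eq_of_cut hc hsc hs'c hss', hconct, hconcp, ha, hpremt, hpa₁, hpa₂, hb, hpremp,
      hpb₁, hpb₂, _, fun x => some x.val, ⟨t, htp⟩, fun _ => Option.some_ne_none _,
      pInjOnto_subtype_val_of_ne _ _, pInjOnto_subtype_val _, by simp, ?_, by simp,
      by simp [hbt], by simp [hWF.boxes_eq_empty hbt]; rfl,
      agreesOn_restrict_erase (fun _ hn => if_neg hn) ?_ ?_, ?_, ?_⟩)⟩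
  · rintro x ⟨-, hxs'⟩ h
    exact hxs' (eq_of_concls_eq_singleton hconcp h)
  · intro x _ n hn
    split_ifs at hn with h₁ h₂
    · exact Option.some.inj hn ▸ ne_of_sort_ne (by rw [hp, hc]; decide)
    · exact Option.some.inj hn ▸ htp
    · rintro rfl
      rcases htb.1 hn with rfl | rfl
      exacts [h₁ (Or.inr rfl), h₂ (Or.inr rfl)]
  · rintro n - b hb rfl
    exact absurd (hWF.sort_eq_bot_of_box_eq hb) (by rw [hp]; decide)
  · rintro ⟨n, hn⟩ h
    exact Subtype.ext (by simpa using h)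
  · intro n h
    exact absurd (hWF.sort_eq_bot_of_box_eq h) (by rw [ht]; decide)
  · rintro ⟨x, hxs, _⟩ hx
    simp only [Set.mem_insert_iff, Set.mem_singleton_iff, not_or] at hx
    exact ⟨hsrc_t x hxs, by simp [hx], fun h => by simp_all, rfl⟩
  · rintro ⟨x, hxs, _⟩ _ ⟨⟩ hx
    exact ⟨rfl, by simp [hsrc_t x hxs], by simp [restrict, hx, htc.symm], rfl⟩
  · rintro ⟨x, hxs, _⟩ _ ⟨⟩ hx
    have : ¬ (x = a₁ ∨ x = b₁) := by
      rcases hx with rfl | rfl <;> simp [ha.symm, hb.symm, hab.1, hab.2]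
    exact ⟨rfl, by simp [hsrc_t x hxs], by simp [restrict, this, hx], rfl⟩

theorem reducible_of_cut_principal (hWF : R.WF) {c : R.Node} {e h : R.Edge}
    (hc : R.sort c = .cut) (hbc : R.box c = none) (hec : R.tgt e = some c)
    (hhc : R.tgt h = some c) (hdual : R.typ h = (R.typ e).dual)
    (hbe : R.box (R.src e) = none) (hbh : R.box (R.src h) = none)
    (hesync : R.sort (R.src e) ≠ .sync) (heax : R.sort (R.src e) ≠ .ax)
    (hhsync : R.sort (R.src h) ≠ .sync) (hhax : R.sort (R.src h) ≠ .ax) : R.Reducible := by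
  have hsorts : R.sort (R.src h) = (R.sort (R.src e)).dual := by
    rw [← hWF.principalSort_typ hhax hhsync, hdual, Formula.principalSort_dual,
      hWF.principalSort_typ heax hesync]
  cases hs : R.sort (R.src e) <;> rw [hs] at hsorts
  · exact absurd hs heax
  · exact absurd hs (hWF.sort_src_ne_cut e)
  · exact reducible_of_tensParr hWF hc hs hsorts hbc hbe hbh rfl rfl hec hhc
  · exact reducible_of_tensParr hWF hc hsorts hs hbc hbh hbe rfl rfl hhc hec
  · exact reducible_of_oneBot hWF hc hs hsorts hbc hbe hbh rfl rfl hec hhc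
  · exact reducible_of_oneBot hWF hc hsorts hs hbc hbh hbe rfl rfl hhc hec
  · exact absurd hs hesync

end Struct

/-! ## The search for a redex -/

namespace Struct

variable {R : Struct}

theorem exists_tgt_of_hasBotB (hcl : R.Closed) {e : R.Edge} (hbot : (R.typ e).hasBotB = true) :
    ∃ n, R.tgt e = some n :=
  Option.ne_none_iff_exists'.1 fun h => by simp [hcl e h] at hbot

theorem Correct.not_connectsAt_self (hC : R.Correct) {e : R.Edge} {u : R.Node} :
    ¬ R.ConnectsAt none e u u := fun h =>
  hC none ⟨0, fun _ => u, fun _ => e, fun _ _ _ => Subsingleton.elim (α := Fin 1) _ _,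
    fun _ _ _ => Subsingleton.elim (α := Fin 1) _ _, fun _ => h,
    fun _ _ _ _ _ _ => Subsingleton.elim (α := Fin 1) _ _,
    fun _ _ _ _ _ _ => Subsingleton.elim (α := Fin 1) _ _⟩

theorem Correct.tgt_ne_of_src (hC : R.Correct) {e : R.Edge} {n : R.Node} (hen : R.src e = n)
    (hbn : R.box n = none) : R.tgt e ≠ some n := fun h =>
  hC.not_connectsAt_self
    ⟨n, h, Or.inl hbn, Or.inl ⟨Or.inl ⟨hen ▸ hbn, hen.symm⟩, Or.inl ⟨hbn, rfl⟩⟩⟩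

open Classical in
/-- The node standing for `n` in the `0`-graph: the outermost box containing `n`, if any. -/
noncomputable def rep0 (R : Struct) (n : R.Node) : R.Node :=
  if h : ∃ b ∈ R.boxes n, R.box b = none then h.choose else n

theorem WF.rep0_eq_self (hWF : R.WF) {n : R.Node} (hn : R.box n = none) : R.rep0 n = n := by
  simp [rep0, hWF.boxes_eq_empty hn]

theorem WF.rep0_spec (hWF : R.WF) {n : R.Node} (hn : R.box n ≠ none) :
    R.rep0 n ∈ R.boxes n ∧ R.box (R.rep0 n) = none := by
  have h := hWF.exists_mem_boxes_box_eq_none hn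
  rw [rep0, dif_pos h]
  exact h.choose_spec

theorem WF.repAt_rep0 (hWF : R.WF) (n : R.Node) : R.RepAt none n (R.rep0 n) := by
  by_cases hn : R.box n = none
  · exact Or.inl ⟨hn, hWF.rep0_eq_self hn⟩
  · exact Or.inr (hWF.rep0_spec hn)

/-- The start of a traversal of an edge: `(e, true)` crosses `e` downwards, `(e, false)`
upwards. The default of `getD` never matters: the search only crosses edges with a target. -/
def trTail : R.Edge × Bool → R.Node
  | (e, true) => R.src e
  | (e, false) => (R.tgt e).getD (R.src e)

/-- The end of a traversal; crossing an edge upwards out of a box lands on the box. -/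
noncomputable def trHead : R.Edge × Bool → R.Node
  | (e, true) => (R.tgt e).getD (R.src e)
  | (e, false) => R.rep0 (R.src e)

variable (R) in
/-- The traversals met by the search for a redex: `⊥`-carrying edges at depth `0` crossed
downwards, and premisses of depth-`0` cuts and sync links crossed upwards towards a box, a sync
link or an axiom. -/
def Searchable : R.Edge × Bool → Prop
  | (e, true) => R.box (R.src e) = none ∧ (R.typ e).hasBotB = true
  | (e, false) => ∃ n, R.tgt e = some n ∧ R.box n = none ∧
      (R.sort n = .cut ∨ (R.sort n = .sync ∧ ¬ (R.typ e).Negative)) ∧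
      (R.box (R.src e) ≠ none ∨ R.sort (R.src e) = .sync ∨ R.sort (R.src e) = .ax)

variable (R) in
def SearchAdj : {t // R.Searchable t} → {t // R.Searchable t} → Prop :=
  WalkAdj (fun t => R.trTail t.1) (fun t => R.trHead t.1) (fun t => t.1.1)

theorem Searchable.connectsAt (hWF : R.WF) (hcl : R.Closed) {t : R.Edge × Bool}
    (ht : R.Searchable t) : R.ConnectsAt none t.1 (R.trTail t) (R.trHead t) := by
  obtain ⟨e, _ | _⟩ := t
  · obtain ⟨n, hen, hbn, -, -⟩ := ht
    exact ⟨n, hen, Or.inl hbn,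
      Or.inr ⟨hWF.repAt_rep0 _, Or.inl ⟨hbn, by simp [trTail, hen]⟩⟩⟩
  · obtain ⟨hbe, hbot⟩ := ht
    obtain ⟨n, hen⟩ := exists_tgt_of_hasBotB hcl hbot
    exact ⟨n, hen, Or.inr hbe, Or.inl ⟨Or.inl ⟨hbe, rfl⟩,
      Or.inl ⟨hWF.box_tgt_eq_none hbe hen, by simp [trHead, hen]⟩⟩⟩

theorem Searchable.trHead_eq_of_outEdgeOf (hWF : R.WF) {t : R.Edge × Bool}
    (ht : R.Searchable t) {l : R.Node} (hl : R.OutEdgeOf l t.1) : R.trHead t = R.rep0 l := by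
  obtain ⟨hls, ⟨hsrc, hpos⟩ | ⟨htgt, hneg⟩⟩ := hl <;> obtain ⟨e, _ | _⟩ := t
  · simp [trHead, ← hsrc]
  · simp [hpos.hasBotB_eq_false, Searchable] at ht
  · obtain ⟨n, hen, -, hn, -⟩ := ht
    obtain rfl : l = n := Option.some.inj (htgt.symm.trans hen)
    rcases hn with hn | hn
    · simp [hn] at hls
    · exact absurd hneg hn.2
  · simp [trHead, htgt, hWF.rep0_eq_self (hWF.box_tgt_eq_none ht.1 htgt)]

theorem Searchable.trHead_eq_of_tgt_parr {t : R.Edge × Bool} (ht : R.Searchable t) {p : R.Node}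
    (hp : R.sort p = .parr) (htp : R.tgt t.1 = some p) : R.trHead t = p := by
  obtain ⟨e, _ | _⟩ := t
  · obtain ⟨n, hen, -, hn, -⟩ := ht
    obtain rfl : p = n := Option.some.inj (htp.symm.trans hen)
    rcases hn with hn | ⟨hn, -⟩ <;> simp [hn] at hp
  · simp [trHead, htp]

theorem Searchable.trTail_eq_trHead (hWF : R.WF) {a b : R.Edge × Bool} (ha : R.Searchable a)
    (hb : R.Searchable b) (hab : a ≠ b) (he : a.1 = b.1) : R.trTail b = R.trHead a := by
  obtain ⟨e, _ | _⟩ := a <;> obtain ⟨e', _ | _⟩ := b <;> obtain rfl : e = e' := he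
  · exact absurd rfl hab
  · simp [trTail, trHead, hWF.rep0_eq_self hb.1]
  · rfl
  · exact absurd rfl hab

theorem Correct.searchAdj_acyclic (hWF : R.WF) (hC : R.Correct) (hcl : R.Closed)
    (t : {t // R.Searchable t}) : ¬ Relation.TransGen R.SearchAdj t t := fun h => by
  obtain ⟨k, g, hg, htail, hedge⟩ := WalkAdj.exists_simple_cycle
    (fun a hloop => hC.not_connectsAt_self (hloop ▸ a.2.connectsAt hWF hcl))
    (fun a b hab he => Searchable.trTail_eq_trHead hWF a.2 b.2 (fun h => hab (Subtype.ext h)) he) h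
  have hsucc : ∀ i j, R.trHead (g i).1 = R.trHead (g j).1 → i = j := fun i j hij =>
    add_right_cancel (htail ((hg i).1.symm.trans (hij.trans (hg j).1)))
  refine hC none ⟨k, fun i => R.trTail (g i).1, fun i => (g i).1.1, htail, hedge, fun i => ?_,
    fun p hp i hi j hj => ?_, fun l hl i hi j hj => ?_⟩
  · rw [← (hg i).1]
    exact (g i).2.connectsAt hWF hcl
  · exact hsucc i j (((g i).2.trHead_eq_of_tgt_parr hp hi).trans
      ((g j).2.trHead_eq_of_tgt_parr hp hj).symm)
  · exact hsucc i j (((g i).2.trHead_eq_of_outEdgeOf hWF hi).trans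
      ((g j).2.trHead_eq_of_outEdgeOf hWF hj).symm)

theorem searchable_up_or_principal {c : R.Node} (hc : R.sort c = .cut) (hbc : R.box c = none)
    {e : R.Edge} (hec : R.tgt e = some c) : R.Searchable (e, false) ∨
      (R.box (R.src e) = none ∧ R.sort (R.src e) ≠ .sync ∧ R.sort (R.src e) ≠ .ax) := by
  by_cases hsrc : R.box (R.src e) ≠ none ∨ R.sort (R.src e) = .sync ∨ R.sort (R.src e) = .ax
  · exact Or.inl ⟨c, hec, hbc, Or.inl hc, hsrc⟩
  · simp only [not_or, not_not] at hsrc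
    exact Or.inr hsrc

theorem progress_sync (hWF : R.WF) (hC : R.Correct) {l : R.Node} (hl : R.sort l = .sync)
    (hbl : R.box l = none) {e : R.Edge} (hel : R.src e = l) (hpos : (R.typ e).Positive) :
    R.Reducible ∨ ∃ t, R.Searchable t ∧ R.trTail t = l ∧ t.1 ≠ e := by
  by_cases hones : ∀ x ∈ R.prems l, R.sort (R.src x) = .one
  · exact Or.inl (reducible_of_syncElim hWF hl hbl hones)
  simp only [not_forall, mem_prems] at hones
  obtain ⟨x, hxl, hxone⟩ := hones
  have hxe : x ≠ e := by
    rintro rfl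
    exact hC.tgt_ne_of_src hel hbl hxl
  rcases hWF.polarized_of_tgt_sync hl hxl with hxpos | hxneg
  · by_cases hsrc :
        R.box (R.src x) ≠ none ∨ R.sort (R.src x) = .sync ∨ R.sort (R.src x) = .ax
    · exact Or.inr ⟨(x, false), ⟨l, hxl, hbl, Or.inr ⟨hl, hxpos.not_negative⟩, hsrc⟩,
        by simp [trTail, hxl], hxe⟩
    simp only [not_or, not_not] at hsrc
    obtain ⟨hbx, hxsync, hxax⟩ := hsrc
    have htens : R.sort (R.src x) = .tens := by
      rw [← hWF.principalSort_typ hxax hxsync]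
      exact hxpos.principalSort.resolve_left fun h =>
        hxone (by rw [← hWF.principalSort_typ hxax hxsync, h])
    exact Or.inl (reducible_of_syncMult hWF hl (Or.inl htens) hbl hbx rfl hxl)
  · obtain ⟨f, hfl, -, hft, -⟩ := hWF.sync_prem_concl hl hxl
    refine Or.inr ⟨(f, true),
      ⟨by rw [hfl]; exact hbl, by rw [hft]; exact hxneg.hasBotB_eq_true⟩, hfl, ?_⟩
    rintro rfl
    exact hpos.not_negative (hft ▸ hxneg)

theorem Searchable.progress_up (hWF : R.WF) (hC : R.Correct) {e : R.Edge}
    (he : R.Searchable (e, false)) :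
    R.Reducible ∨ ∃ t, R.Searchable t ∧ R.trTail t = R.trHead (e, false) ∧ t.1 ≠ e := by
  obtain ⟨n, hen, hbn, hn, hsrc⟩ := he
  by_cases hbe : R.box (R.src e) = none
  swap
  · obtain ⟨hmem, hb0⟩ := hWF.rep0_spec hbe
    obtain ⟨k, hk, hkt⟩ := hWF.exists_concl_bot (hWF.sort_eq_bot_of_mem_boxes hmem)
    refine Or.inr ⟨(k, true), ⟨by rw [hk]; exact hb0, by rw [hkt]; rfl⟩, hk, ?_⟩
    rintro rfl
    exact hbe (hk ▸ hb0)
  rcases hsrc with hbe' | hsync | hax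
  · exact absurd hbe hbe'
  · rcases hWF.polarized_of_src_sync hsync rfl with hpos | hneg
    · refine (progress_sync hWF hC hsync hbe rfl hpos).imp_right ?_
      rintro ⟨t, ht, htl, hte⟩
      exact ⟨t, ht, by rw [htl]; simp [trHead, hWF.rep0_eq_self hbe], hte⟩
    · rcases hn with hcut | ⟨-, hnneg⟩
      · exact Or.inl (reducible_of_syncCut hWF hsync hcut hbe hbn hneg rfl hen)
      · exact absurd hneg hnneg
  · rcases hn with hcut | ⟨hnsync, hnneg⟩
    · exact Or.inl (reducible_of_axCut hWF hC hax hcut hbe hbn rfl hen)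
    · have hpos := (hWF.polarized_of_tgt_sync hnsync hen).resolve_right hnneg
      exact Or.inl (reducible_of_syncAx hWF hnsync hax hbn hbe hpos rfl hen)

theorem progress_cut (hWF : R.WF) (hC : R.Correct) {e : R.Edge} {c : R.Node}
    (hbe : R.box (R.src e) = none) (hbot : (R.typ e).hasBotB = true) (hec : R.tgt e = some c)
    (hc : R.sort c = .cut) (hbc : R.box c = none) :
    R.Reducible ∨ ∃ t, R.Searchable t ∧ R.trTail t = c ∧ t.1 ≠ e := by
  obtain ⟨h, heh, hprem, hdual⟩ := hWF.exists_prems_cut hc hec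
  have hhc : R.tgt h = some c := mem_prems.1 (by simp [hprem])
  rcases searchable_up_or_principal hc hbc hhc with hh | ⟨hbh, hhsync, hhax⟩
  · exact Or.inr ⟨(h, false), hh, by simp [trTail, hhc], heh.symm⟩
  left
  by_cases heax : R.sort (R.src e) = .ax
  · exact reducible_of_axCut hWF hC heax hc hbe hbc rfl hec
  by_cases hesync : R.sort (R.src e) = .sync
  · have hneg := (hWF.polarized_of_src_sync hesync rfl).resolve_left fun hpos => by
      simp [hpos.hasBotB_eq_false] at hbot
    exact reducible_of_syncCut hWF hesync hc hbe hbc hneg rfl hec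
  exact reducible_of_cut_principal hWF hc hbc hec hhc hdual hbe hbh hesync heax hhsync hhax

theorem Searchable.progress_down (hWF : R.WF) (hC : R.Correct) (hcl : R.Closed) {e : R.Edge}
    (he : R.Searchable (e, true)) :
    R.Reducible ∨ ∃ t, R.Searchable t ∧ R.trTail t = R.trHead (e, true) ∧ t.1 ≠ e := by
  obtain ⟨hbe, hbot⟩ := he
  obtain ⟨n, hen⟩ := exists_tgt_of_hasBotB hcl hbot
  have hbn := hWF.box_tgt_eq_none hbe hen
  rw [show R.trHead (e, true) = n by simp [trHead, hen]]
  by_cases hc : R.sort n = .cut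
  · exact progress_cut hWF hC hbe hbot hen hc hbn
  have hn : (R.sort n = .tens ∨ R.sort n = .parr) ∨ R.sort n = .sync := by
    have hprem := fun h => hWF.tgt_ne_of_sort h hen
    cases hs : R.sort n <;> simp [hs] at hprem hc ⊢
  obtain ⟨g, hgn, hg⟩ := hWF.exists_concl_hasBotB hn hen hbot
  refine Or.inr ⟨(g, true), ⟨by rw [hgn]; exact hbn, hg⟩, hgn, ?_⟩
  rintro rfl
  exact hC.tgt_ne_of_src hgn hbn hen

theorem Searchable.progress (hWF : R.WF) (hC : R.Correct) (hcl : R.Closed) {t : R.Edge × Bool}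
    (ht : R.Searchable t) :
    R.Reducible ∨ ∃ t', R.Searchable t' ∧ R.trTail t' = R.trHead t ∧ t'.1 ≠ t.1 := by
  obtain ⟨e, _ | _⟩ := t
  exacts [progress_up hWF hC ht, progress_down hWF hC hcl ht]

theorem reducible_of_searchable (hWF : R.WF) (hC : R.Correct) (hcl : R.Closed)
    {t : R.Edge × Bool} (ht : R.Searchable t) : R.Reducible := by
  have : Nonempty {t // R.Searchable t} := ⟨⟨t, ht⟩⟩
  obtain ⟨⟨s, hs⟩, hsink⟩ := Finite.exists_forall_not_rel (hC.searchAdj_acyclic hWF hcl)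
  refine (hs.progress hWF hC hcl).resolve_right ?_
  rintro ⟨s', hs', htail, hne⟩
  exact hsink ⟨s', hs'⟩ ⟨htail.symm, fun h => hne h.symm⟩

theorem reducible_or_exists_searchable (hWF : R.WF) {c : R.Node}
    (hc : R.sort c = .cut) : R.Reducible ∨ ∃ t, R.Searchable t := by
  by_cases hbc : R.box c = none
  swap
  · obtain ⟨b, hb, hb0⟩ := hWF.exists_mem_boxes_box_eq_none hbc
    obtain ⟨k, hk, hkt⟩ := hWF.exists_concl_bot (hWF.sort_eq_bot_of_mem_boxes hb)
    exact Or.inr ⟨(k, true), by rw [hk]; exact hb0, by rw [hkt]; rfl⟩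
  obtain ⟨e, h, -, hprem, hdual⟩ := hWF.cut_spec hc
  have hec : R.tgt e = some c := mem_prems.1 (by simp [hprem])
  have hhc : R.tgt h = some c := mem_prems.1 (by simp [hprem])
  rcases searchable_up_or_principal hc hbc hec with he | ⟨hbe, hesync, heax⟩
  · exact Or.inr ⟨_, he⟩
  rcases searchable_up_or_principal hc hbc hhc with hh | ⟨hbh, hhsync, hhax⟩
  · exact Or.inr ⟨_, hh⟩
  exact Or.inl (reducible_of_cut_principal hWF hc hbc hec hhc hdual hbe hbh hesync heax hhsync hhax)

end Struct

/-- **Lazy Cut Elimination.**  Let `R` be a closed SMLL net (no occurrence of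
`⊥` in its conclusions).  If `R` is in normal form for the reduction relation
`→`, then `R` is cut-free. -/
theorem smll_lazy_cut_elimination (R : Struct) (hWF : R.WF) (hC : R.Correct)
    (hcl : R.Closed) (hnf : ∀ Q : Struct, ¬ Step R Q) :
    ∀ n : R.Node, R.sort n ≠ .cut := by
  intro n hn
  obtain ⟨Q, hQ⟩ : R.Reducible := by
    rcases Struct.reducible_or_exists_searchable hWF hn with h | ⟨t, ht⟩
    exacts [h, Struct.reducible_of_searchable hWF hC hcl ht]
  exact hnf Q hQ
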